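/- (Representation, direction C.) For every bunch of layer groups 𝒢, the bunch of layer groups constructed from the involutive FL_e-chain X_𝒢 equals 𝒢, i.e. 𝒢_{(X_𝒢)} = 𝒢; and for every odd or even involutive FL_e-chain X, the involutive FL_e-chain constructed from the bunch 𝒢_X is isomorphic to X, i.e. X_{(𝒢_X)} ≅ X. -/

import Mathlib

open Classical

universe u v

/-- An FL_e-chain: a totally ordered commutative monoid with a residuation operation
`imp` (so that `x * y ≤ z ↔ y ≤ imp x z`) and a falsum constant `fc`.
The monoid unit `1` plays the role of the constant `t`. -/
class FLeChain (X : Type u) extends LinearOrder X, CommMonoid X where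
  imp : X → X → X
  fc : X
  residuation : ∀ x y z : X, x * y ≤ z ↔ y ≤ imp x z

namespace FLe

variable {X : Type u}

/-- The residual `x → y`. -/
def imp [FLeChain X] (x y : X) : X := FLeChain.imp x y

/-- The falsum constant `f`. -/
def fc (X : Type u) [FLeChain X] : X := FLeChain.fc

/-- The residual complement `x' = x → f`. -/
def compl [FLeChain X] (x : X) : X := imp x (fc X)

/-- An FL_e-chain is involutive if `x'' = x` for all `x`. -/
def Involutive (X : Type u) [FLeChain X] : Prop := ∀ x : X, compl (compl x) = x

/-- An involutive FL_e-chain is odd if `t' = t`. -/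
def OddChain (X : Type u) [FLeChain X] : Prop := compl (1 : X) = 1

/-- An involutive FL_e-chain is even if `x < t ↔ x ≤ f` for all `x`. -/
def EvenChain (X : Type u) [FLeChain X] : Prop := ∀ x : X, x < 1 ↔ x ≤ fc X

/-- Odd or even involutive FL_e-chain. -/
def OddEven (X : Type u) [FLeChain X] : Prop := Involutive X ∧ (OddChain X ∨ EvenChain X)

/-- `x` is idempotent. -/
def IsIdem [Mul X] (x : X) : Prop := x * x = x

/-- Homomorphisms of FL_e-chains: order preserving, multiplicative, residual preserving,
and preserving both constants. -/
def IsFLeHom (X : Type u) (Y : Type v) [FLeChain X] [FLeChain Y] (φ : X → Y) : Prop :=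
  Monotone φ ∧ (∀ a b : X, φ (a * b) = φ a * φ b) ∧
    (∀ a b : X, φ (imp a b) = imp (φ a) (φ b)) ∧ φ (1 : X) = 1 ∧ φ (fc X) = fc Y

/-- The skeleton `κ`: the set of positive idempotent elements. -/
def kappa (X : Type u) [FLeChain X] : Set X := {u : X | 1 ≤ u ∧ IsIdem u}

/-- `κ_o`: it is `{t}` if the chain is odd, empty otherwise. -/
def kappaO (X : Type u) [FLeChain X] : Set X := {u : X | u = 1 ∧ OddChain X}

/-- The layer `L_u = {x : x → x = u}`. -/
def layer [FLeChain X] (u : X) : Set X := {x : X | imp x x = u}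

/-- `H_u = {x ∈ L_u : x · u' < x}`, the set of `u`-invertible elements of the layer. -/
def Hs [FLeChain X] (u : X) : Set X := {x : X | x ∈ layer u ∧ x * compl u < x}

/-- The dotted copy `•H_u = {x · u' : x ∈ H_u}`. -/
def dotH [FLeChain X] (u : X) : Set X := (fun x => x * compl u) '' Hs u

/-- `u ∈ κ_I`: a positive idempotent whose complement is idempotent, not in `κ_o`. -/
def inKI [FLeChain X] (u : X) : Prop := u ∈ kappa X ∧ IsIdem (compl u) ∧ u ∉ kappaO X

/-- `u ∈ κ_J`: a positive idempotent whose complement is not idempotent. -/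
def inKJ [FLeChain X] (u : X) : Prop := u ∈ kappa X ∧ ¬ IsIdem (compl u)

/-- The layer group carrier: `G_u = L_u \ •H_u` if `u ∈ κ_I`, and `G_u = L_u` otherwise. -/
def Gs [FLeChain X] (u : X) : Set X := {x : X | x ∈ layer u ∧ (inKI u → x ∉ dotH u)}

/-- The layer group multiplication: `x ·_u y = ((x·y)→u)→u` if `u ∈ κ_I`, `x·y` otherwise. -/
noncomputable def gmul [FLeChain X] (u x y : X) : X :=
  if inKI u then imp (imp (x * y) u) u else x * y

/-- The layer group inversion `x^{-1_u} = x → u`. -/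
def ginv [FLeChain X] (u x : X) : X := imp x u

/-- The union of all layer group carriers. -/
def GX (X : Type u) [FLeChain X] : Set X := ⋃ u ∈ kappa X, Gs u

end FLe

/-! ### Bunches of layer groups -/

/-- The data of a bunch of layer groups over a skeleton type `K` with layers carried by
subsets of an ambient type `Λ`:  a least element `t`, a partition `(Ko, KJ, KI)` of the
skeleton, layer group carriers `G u` with distinguished subsets `H u`, layerwise group
operations `mul`, `inv`, `unit`, layerwise orders `le`, and transitions `tr u v`. -/
structure BunchData (K : Type u) (Λ : Type v) where
  t : K
  Ko : Set K
  KJ : Set K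
  KI : Set K
  G : K → Set Λ
  H : K → Set Λ
  mul : K → Λ → Λ → Λ
  inv : K → Λ → Λ
  unit : K → Λ
  le : K → Λ → Λ → Prop
  tr : K → K → Λ → Λ

namespace BunchData

variable {K : Type u} {Λ : Type v}

/-- Strict layerwise order. -/
def lt (B : BunchData K Λ) (u : K) (x y : Λ) : Prop := B.le u x y ∧ x ≠ y

/-- `p` is the lower cover of `x` in the layer group `G u`. -/
def IsLowerCoverIn (B : BunchData K Λ) (u : K) (p x : Λ) : Prop :=
  p ∈ B.G u ∧ B.lt u p x ∧ ∀ z ∈ B.G u, B.lt u z x → B.le u z p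

/-- `s` is the upper cover of `x` in the layer group `G u`. -/
def IsUpperCoverIn (B : BunchData K Λ) (u : K) (s x : Λ) : Prop :=
  s ∈ B.G u ∧ B.lt u x s ∧ ∀ z ∈ B.G u, B.lt u x z → B.le u s z

/-- The axioms of a bunch of layer groups:  a direct system of totally ordered abelian
groups over a totally ordered skeleton with least element `t` partitioned into
`Ko ∪ KJ ∪ KI`, satisfying (G1), (G2) and (G3). -/
structure IsBunch [LinearOrder K] (B : BunchData K Λ) : Prop where
  t_least : ∀ u : K, B.t ≤ u
  cover : ∀ u : K, u ∈ B.Ko ∨ u ∈ B.KJ ∨ u ∈ B.KI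
  disjOJ : ∀ u : K, ¬(u ∈ B.Ko ∧ u ∈ B.KJ)
  disjOI : ∀ u : K, ¬(u ∈ B.Ko ∧ u ∈ B.KI)
  disjJI : ∀ u : K, ¬(u ∈ B.KJ ∧ u ∈ B.KI)
  -- each layer is a totally ordered abelian group
  unit_mem : ∀ u : K, B.unit u ∈ B.G u
  mul_mem : ∀ u : K, ∀ x ∈ B.G u, ∀ y ∈ B.G u, B.mul u x y ∈ B.G u
  inv_mem : ∀ u : K, ∀ x ∈ B.G u, B.inv u x ∈ B.G u
  mul_assoc' : ∀ u : K, ∀ x ∈ B.G u, ∀ y ∈ B.G u, ∀ z ∈ B.G u,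
    B.mul u (B.mul u x y) z = B.mul u x (B.mul u y z)
  mul_comm' : ∀ u : K, ∀ x ∈ B.G u, ∀ y ∈ B.G u, B.mul u x y = B.mul u y x
  mul_unit' : ∀ u : K, ∀ x ∈ B.G u, B.mul u x (B.unit u) = x
  mul_inv' : ∀ u : K, ∀ x ∈ B.G u, B.mul u x (B.inv u x) = B.unit u
  le_refl' : ∀ u : K, ∀ x ∈ B.G u, B.le u x x
  le_trans' : ∀ u : K, ∀ x ∈ B.G u, ∀ y ∈ B.G u, ∀ z ∈ B.G u,
    B.le u x y → B.le u y z → B.le u x z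
  le_antisymm' : ∀ u : K, ∀ x ∈ B.G u, ∀ y ∈ B.G u, B.le u x y → B.le u y x → x = y
  le_total' : ∀ u : K, ∀ x ∈ B.G u, ∀ y ∈ B.G u, B.le u x y ∨ B.le u y x
  mul_le_mul' : ∀ u : K, ∀ x ∈ B.G u, ∀ y ∈ B.G u, ∀ z ∈ B.G u,
    B.le u x y → B.le u (B.mul u z x) (B.mul u z y)
  -- a direct system of o-group homomorphisms
  tr_mem : ∀ u v : K, u ≤ v → ∀ x ∈ B.G u, B.tr u v x ∈ B.G v
  tr_id : ∀ u : K, ∀ x ∈ B.G u, B.tr u u x = x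
  tr_comp : ∀ u v w : K, u ≤ v → v ≤ w → ∀ x ∈ B.G u, B.tr v w (B.tr u v x) = B.tr u w x
  tr_unit : ∀ u v : K, u ≤ v → B.tr u v (B.unit u) = B.unit v
  tr_mul : ∀ u v : K, u ≤ v → ∀ x ∈ B.G u, ∀ y ∈ B.G u,
    B.tr u v (B.mul u x y) = B.mul v (B.tr u v x) (B.tr u v y)
  tr_mono : ∀ u v : K, u ≤ v → ∀ x ∈ B.G u, ∀ y ∈ B.G u,
    B.le u x y → B.le v (B.tr u v x) (B.tr u v y)
  -- (G1)
  g1 : B.Ko ⊆ {B.t}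
  -- (G2): for v ∈ κ_I, H_v ≤ G_v and transitions from strictly below map into H_v
  g2_sub : ∀ v ∈ B.KI, B.H v ⊆ B.G v ∧ B.unit v ∈ B.H v ∧
    (∀ x ∈ B.H v, ∀ y ∈ B.H v, B.mul v x y ∈ B.H v) ∧ (∀ x ∈ B.H v, B.inv v x ∈ B.H v)
  g2_tr : ∀ v ∈ B.KI, ∀ u : K, u < v → ∀ x ∈ B.G u, B.tr u v x ∈ B.H v
  -- (G3): κ_J-layers are discretely ordered and transitions identify the unit with its
  -- lower cover
  g3_disc : ∀ u ∈ B.KJ, ∀ x ∈ B.G u,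
    (∃ p, B.IsLowerCoverIn u p x) ∧ (∃ s, B.IsUpperCoverIn u s x)
  g3_tr : ∀ u ∈ B.KJ, ∀ v : K, u < v → ∀ p, B.IsLowerCoverIn u p (B.unit u) →
    B.tr u v (B.unit u) = B.tr u v p

end BunchData

/-! ### The bunch of layer groups of an odd or even involutive FL_e-chain -/

namespace FLe

/-- The skeleton of an FL_e-chain, as a type. -/
abbrev kappaT (X : Type u) [FLeChain X] := {w : X // w ∈ kappa X}

/-- The bunch of layer groups `𝒢_X` of an FL_e-chain `X`
(Theorem KATEGOR_BUNCH_X/(A)). -/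
noncomputable def bunchOfChain (X : Type u) [FLeChain X] : BunchData (kappaT X) X where
  t := ⟨1, le_refl 1, mul_one 1⟩
  Ko := {w : kappaT X | (w : X) ∈ kappaO X}
  KJ := {w : kappaT X | inKJ (w : X)}
  KI := {w : kappaT X | inKI (w : X)}
  G w := Gs (w : X)
  H w := Hs (w : X)
  mul w x y := gmul (w : X) x y
  inv w x := ginv (w : X) x
  unit w := (w : X)
  le _ x y := x ≤ y
  tr _ v x := (v : X) * x

end FLe

/-! ### The involutive FL_e-chain of a bunch of layer groups -/

namespace BunchData

variable {K : Type u} {Λ : Type v}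

/-- Raw elements of the constructed chain live in `K × Λ × Bool`;  the element
`(u, z, false)` represents `z ∈ G_u ⊆ L_u`, and `(u, a, true)` represents the dotted copy
`•a ∈ •H_u` (for `u ∈ κ_I`, `a ∈ H_u`). -/
def carrier (B : BunchData K Λ) : Set (K × Λ × Bool) :=
  {p | (p.2.2 = false ∧ p.2.1 ∈ B.G p.1) ∨ (p.2.2 = true ∧ p.1 ∈ B.KI ∧ p.2.1 ∈ B.H p.1)}

variable [LinearOrder K]

/-- The map `ρ_v`: it fixes the layers indexed by `u ≥ v` and pushes the lower layers
into `G_v` by `ς_{u→v} ∘ γ_u`. -/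
def rho (B : BunchData K Λ) (v : K) (p : K × Λ × Bool) : K × Λ × Bool :=
  if v ≤ p.1 then p else (v, B.tr p.1 v p.2.1, false)

/-- The strict order within the layer `L_w`:  dotted copies are inserted immediately
below their originals. -/
def llt (B : BunchData K Λ) (w : K) (p q : K × Λ × Bool) : Prop :=
  B.lt w p.2.1 q.2.1 ∨ (p.2.1 = q.2.1 ∧ p.2.2 = true ∧ q.2.2 = false)

/-- The strict order of the constructed chain:
`x < y` iff `ρ_{uv}(x) <_{uv} ρ_{uv}(y)` or (`ρ_{uv}(x) = ρ_{uv}(y)` and `u <_κ v`). -/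
def glt (B : BunchData K Λ) (p q : K × Λ × Bool) : Prop :=
  B.llt (max p.1 q.1) (B.rho (max p.1 q.1) p) (B.rho (max p.1 q.1) q) ∨
    (B.rho (max p.1 q.1) p = B.rho (max p.1 q.1) q ∧ p.1 < q.1)

/-- The order of the constructed chain. -/
def gle (B : BunchData K Λ) (p q : K × Λ × Bool) : Prop := B.glt p q ∨ p = q

/-- The product `∗_w` within the layer `L_w`. -/
noncomputable def star (B : BunchData K Λ) (w : K) (p q : K × Λ × Bool) : K × Λ × Bool :=
  if w ∈ B.KI ∧ B.mul w p.2.1 q.2.1 ∈ B.H w ∧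
      ¬(p.2.1 ∈ B.H w ∧ p.2.2 = false ∧ q.2.1 ∈ B.H w ∧ q.2.2 = false)
  then (w, B.mul w p.2.1 q.2.1, true)
  else (w, B.mul w p.2.1 q.2.1, false)

/-- The multiplication of the constructed chain: `x · y = ρ_{uv}(x) ∗_{uv} ρ_{uv}(y)`. -/
noncomputable def gmulB (B : BunchData K Λ) (p q : K × Λ × Bool) : K × Λ × Bool :=
  B.star (max p.1 q.1) (B.rho (max p.1 q.1) p) (B.rho (max p.1 q.1) q)

/-- The lower cover of `y` in the layer group `G_u` (chosen classically). -/
noncomputable def lowerCoverFn (B : BunchData K Λ) (u : K) (y : Λ) : Λ :=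
  @Classical.epsilon Λ ⟨B.unit B.t⟩ (fun p => B.IsLowerCoverIn u p y)

/-- The residual complement `x^⊥` of the constructed chain. -/
noncomputable def negB (B : BunchData K Λ) (p : K × Λ × Bool) : K × Λ × Bool :=
  if p.1 ∈ B.KI ∧ p.2.2 = true then (p.1, B.inv p.1 p.2.1, false)
  else if p.1 ∈ B.KI ∧ p.2.1 ∈ B.H p.1 then (p.1, B.inv p.1 p.2.1, true)
  else if p.1 ∈ B.KJ then (p.1, B.lowerCoverFn p.1 (B.inv p.1 p.2.1), false)
  else (p.1, B.inv p.1 p.2.1, false)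

/-- The residual of the constructed chain: `x → y = (x · y^⊥)^⊥`. -/
noncomputable def impB (B : BunchData K Λ) (p q : K × Λ × Bool) : K × Λ × Bool :=
  B.negB (B.gmulB p (B.negB q))

/-- The unit `t` of the constructed chain. -/
def tB (B : BunchData K Λ) : K × Λ × Bool := (B.t, B.unit B.t, false)

/-- The falsum `f = t^⊥` of the constructed chain. -/
noncomputable def fB (B : BunchData K Λ) : K × Λ × Bool := B.negB B.tB

end BunchData

/-! ### Chain operations on a subset of an ambient type, and the induced layer data -/

/-- The operations of an FL_e-chain carried by a subset `C` of an ambient type `A`. -/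
structure ChainOps (A : Type u) where
  C : Set A
  mul : A → A → A
  imp : A → A → A
  le : A → A → Prop
  t : A
  f : A

namespace ChainOps

variable {A : Type u} (O : ChainOps A)

def lt (x y : A) : Prop := O.le x y ∧ x ≠ y
def compl (x : A) : A := O.imp x O.f
def IsIdem (x : A) : Prop := O.mul x x = x
def kappa : Set A := {w : A | w ∈ O.C ∧ O.le O.t w ∧ O.IsIdem w}
def isOdd : Prop := O.compl O.t = O.t
def kappaO : Set A := {w : A | w = O.t ∧ O.isOdd}
def inKI (w : A) : Prop := w ∈ O.kappa ∧ O.IsIdem (O.compl w) ∧ w ∉ O.kappaO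
def inKJ (w : A) : Prop := w ∈ O.kappa ∧ ¬ O.IsIdem (O.compl w)
def layer (w : A) : Set A := {x : A | x ∈ O.C ∧ O.imp x x = w}
def Hs (w : A) : Set A := {x : A | x ∈ O.layer w ∧ O.lt (O.mul x (O.compl w)) x}
def dotH (w : A) : Set A := (fun x => O.mul x (O.compl w)) '' O.Hs w
def Gs (w : A) : Set A := {x : A | x ∈ O.layer w ∧ (O.inKI w → x ∉ O.dotH w)}
noncomputable def gmul (w x y : A) : A :=
  if O.inKI w then O.imp (O.imp (O.mul x y) w) w else O.mul x y
def ginv (w x : A) : A := O.imp x w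
def tr (v x : A) : A := O.mul v x

end ChainOps

/-! ### Bunch homomorphisms -/

/-- A bunch homomorphism from `B₁` to `B₂`, given by its skeleton part `σ` and its action
`Φ` on the union of the layer groups;  conditions (S1)–(S8). -/
def IsBunchHomB {K₁ Λ₁ K₂ Λ₂ : Type*}
    [LinearOrder K₁] [LinearOrder K₂]
    (B₁ : BunchData K₁ Λ₁) (B₂ : BunchData K₂ Λ₂) (σ : K₁ → K₂) (Φ : Λ₁ → Λ₂) : Prop :=
  -- (S1): the skeleton part is isotone
  Monotone σ ∧
  -- (S2): each Φ_u is an o-group homomorphism from G_u into G_{σ u}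
  (∀ u : K₁, ∀ x ∈ B₁.G u, Φ x ∈ B₂.G (σ u)) ∧
  (∀ u : K₁, Φ (B₁.unit u) = B₂.unit (σ u)) ∧
  (∀ u : K₁, ∀ x ∈ B₁.G u, ∀ y ∈ B₁.G u, Φ (B₁.mul u x y) = B₂.mul (σ u) (Φ x) (Φ y)) ∧
  (∀ u : K₁, ∀ x ∈ B₁.G u, Φ (B₁.inv u x) = B₂.inv (σ u) (Φ x)) ∧
  (∀ u : K₁, ∀ x ∈ B₁.G u, ∀ y ∈ B₁.G u, B₁.le u x y → B₂.le (σ u) (Φ x) (Φ y)) ∧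
  -- (S3): Φ commutes with the transitions
  (∀ u v : K₁, u ≤ v → ∀ x ∈ B₁.G u, Φ (B₁.tr u v x) = B₂.tr (σ u) (σ v) (Φ x)) ∧
  -- (S4): the least element of the skeleton is preserved
  σ B₁.t = B₂.t ∧
  -- (S5): the partition is respected
  (∀ u ∈ B₁.Ko, σ u ∈ B₂.Ko) ∧
  (∀ u ∈ B₁.KJ, σ u ∈ B₂.KJ ∨ σ u ∈ B₂.Ko) ∧
  (∀ u ∈ B₁.KI, σ u ∈ B₂.KI ∨ σ u ∈ B₂.Ko) ∧
  -- (S6): subgroups and their complements are preserved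
  (∀ u ∈ B₁.KI, σ u ∈ B₂.KI →
    (∀ x ∈ B₁.H u, Φ x ∈ B₂.H (σ u)) ∧
    (∀ x ∈ B₁.G u, x ∉ B₁.H u → Φ x ∈ B₂.G (σ u) ∧ Φ x ∉ B₂.H (σ u))) ∧
  -- (S7): the neighborhood operations are respected
  (∀ u ∈ B₁.KJ, σ u ∈ B₂.KJ →
    ∀ x ∈ B₁.G u, ∀ p, B₁.IsLowerCoverIn u p x → B₂.IsLowerCoverIn (σ u) (Φ p) (Φ x)) ∧
  (∀ u ∈ B₁.KJ, σ u ∈ B₂.Ko →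
    ∀ x ∈ B₁.G u, ∀ p, B₁.IsLowerCoverIn u p x → Φ p = Φ x) ∧
  -- (S8): partial injectivity
  (∀ u v : K₁, ∀ x ∈ B₁.G u, ∀ y ∈ B₁.G v,
    σ (max u v) ∈ B₂.KI →
    B₁.tr u (max u v) x ∈ B₁.H (max u v) →
    B₁.IsLowerCoverIn (max u v) (B₁.tr v (max u v) y) (B₁.tr u (max u v) x) →
    B₂.IsLowerCoverIn (σ (max u v)) (Φ (B₁.tr v (max u v) y)) (Φ (B₁.tr u (max u v) x)))

/-- An isomorphism in the category of bunches of layer groups. -/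
def IsBunchIso {K₁ Λ₁ K₂ Λ₂ : Type*}
    [LinearOrder K₁] [LinearOrder K₂]
    (B₁ : BunchData K₁ Λ₁) (B₂ : BunchData K₂ Λ₂) (σ : K₁ → K₂) (Φ : Λ₁ → Λ₂) : Prop :=
  IsBunchHomB B₁ B₂ σ Φ ∧
    ∃ (σ' : K₂ → K₁) (Φ' : Λ₂ → Λ₁), IsBunchHomB B₂ B₁ σ' Φ' ∧
      (∀ u : K₁, σ' (σ u) = u) ∧ (∀ v : K₂, σ (σ' v) = v) ∧
      (∀ u : K₁, ∀ x ∈ B₁.G u, Φ' (Φ x) = x) ∧ (∀ v : K₂, ∀ y ∈ B₂.G v, Φ (Φ' y) = y)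

namespace FLe

/-- The extension of a bunch homomorphism `Φ` between the bunches of two chains to the
whole chain: on `G_u` it is `Φ`, and the dotted copy `•a ∈ •H_u` is sent to `Φ(a)` if
`Φ(u) ∈ κ_o`, and to the dotted copy `•(Φ a)` if `Φ(u) ∈ κ_I`. -/
noncomputable def extendHom (X : Type u) (Y : Type v) [FLeChain X] [FLeChain Y]
    (Φ : X → Y) (x : X) : Y :=
  if x ∈ Gs (imp x x) then Φ x
  else if inKI (Φ (imp x x)) then Φ (imp (compl x) (imp x x)) * compl (Φ (imp x x))
  else Φ (imp (compl x) (imp x x))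

end FLe

open FLe BunchData

/-!
Elements of `X_𝒢` are triples `(u, a, d)`: `a ∈ G_u` if `d = false`, and the dotted copy
`•a ∈ •H_u` of `a ∈ H_u` if `d = true`.

`𝒢_{(X_𝒢)} = 𝒢`: the positive idempotents of `X_𝒢` are the units `(u, 1_u, false)`, and the
complement of `(u, 1_u, false)` is itself, its dotted copy, or the lower cover of `1_u`
according as `u ∈ κ_o`, `κ_I` or `κ_J`; this recovers the skeleton and its partition. Since
`p → p` is the unit of the layer of `p`, and `p` times the dotted unit is dotted exactly when
`p ∈ H_u`, the layers, the groups `G_u` and the subgroups `H_u` are recovered as well.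

`X ≅ X_{(𝒢_X)}`: each `x` lies in the layer `L_u` with `u = x → x`, and either `x ∈ G_u` or
`x = a · u'` with `a = x' → u ∈ H_u`; this is the bijection `toGlued`. The layer of `x · y` is
the larger of the two layers, so a product is computed in that layer after moving the other
factor there by the transition `x ↦ v · x`, which is what `ρ` does. Within a layer, `a · u'` is
the lower cover of `a ∈ H_u` and `a' = (a → u) · u'`; these give the order and the complement,
and the residual follows from `x → y = (x · y')'`.
-/

/-! ### Computing in the glued chain `X_𝒢` -/

namespace BunchData

variable {K : Type u} {Λ : Type v} (B : BunchData K Λ)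

theorem star_eq_dot {w : K} {p q : K × Λ × Bool}
    (h : w ∈ B.KI ∧ B.mul w p.2.1 q.2.1 ∈ B.H w ∧
      ¬(p.2.1 ∈ B.H w ∧ p.2.2 = false ∧ q.2.1 ∈ B.H w ∧ q.2.2 = false)) :
    B.star w p q = (w, B.mul w p.2.1 q.2.1, true) := if_pos h

theorem star_eq_undot {w : K} {p q : K × Λ × Bool}
    (h : ¬(w ∈ B.KI ∧ B.mul w p.2.1 q.2.1 ∈ B.H w ∧
      ¬(p.2.1 ∈ B.H w ∧ p.2.2 = false ∧ q.2.1 ∈ B.H w ∧ q.2.2 = false))) :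
    B.star w p q = (w, B.mul w p.2.1 q.2.1, false) := if_neg h

theorem negB_dot {w : K} (hw : w ∈ B.KI) (a : Λ) : B.negB (w, a, true) = (w, B.inv w a, false) :=
  if_pos ⟨hw, rfl⟩

theorem negB_of_mem_H {w : K} (hw : w ∈ B.KI) {a : Λ} (ha : a ∈ B.H w) :
    B.negB (w, a, false) = (w, B.inv w a, true) :=
  (if_neg fun h => Bool.false_ne_true h.2).trans (if_pos ⟨hw, ha⟩)

theorem negB_of_mem_KJ {w : K} (hI : w ∉ B.KI) (hJ : w ∈ B.KJ) (a : Λ) :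
    B.negB (w, a, false) = (w, B.lowerCoverFn w (B.inv w a), false) :=
  ((if_neg fun h => hI h.1).trans (if_neg fun h => hI h.1)).trans (if_pos hJ)

theorem negB_of_notMem_H {w : K} {a : Λ} (hH : ¬(w ∈ B.KI ∧ a ∈ B.H w)) (hJ : w ∉ B.KJ) :
    B.negB (w, a, false) = (w, B.inv w a, false) :=
  ((if_neg fun h => Bool.false_ne_true h.2).trans (if_neg hH)).trans (if_neg hJ)

theorem lowerCoverFn_eq {u : K} {p y : Λ}
    (hanti : ∀ x ∈ B.G u, ∀ z ∈ B.G u, B.le u x z → B.le u z x → x = z)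
    (hp : B.IsLowerCoverIn u p y) : B.lowerCoverFn u y = p :=
  have hs : B.IsLowerCoverIn u (B.lowerCoverFn u y) y :=
    Classical.epsilon_spec (p := fun p => B.IsLowerCoverIn u p y) ⟨p, hp⟩
  hanti _ hs.1 _ hp.1 (hp.2.2 _ hs.1 hs.2.1) (hs.2.2 _ hp.1 hp.2.1)

theorem snd_fst_star (w : K) (p q : K × Λ × Bool) :
    (B.star w p q).2.1 = B.mul w p.2.1 q.2.1 := by
  unfold star; split_ifs <;> rfl

theorem star_eq_undot_of_notMem_KI {w : K} (hw : w ∉ B.KI) (p q : K × Λ × Bool) :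
    B.star w p q = (w, B.mul w p.2.1 q.2.1, false) :=
  B.star_eq_undot fun h => hw h.1

variable [LinearOrder K]

theorem gmulB_comm (hmul : ∀ w a b, B.mul w a b = B.mul w b a) (p q : K × Λ × Bool) :
    B.gmulB p q = B.gmulB q p := by
  simp only [gmulB, star, max_comm p.1, hmul _ (B.rho _ p).2.1]
  congr 2
  exact propext (by tauto)

theorem rho_of_le {v : K} {p : K × Λ × Bool} (h : v ≤ p.1) : B.rho v p = p := if_pos h

theorem rho_of_lt {v : K} {p : K × Λ × Bool} (h : p.1 < v) :
    B.rho v p = (v, B.tr p.1 v p.2.1, false) := if_neg h.not_ge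

theorem gmulB_of_fst_le {p q : K × Λ × Bool} (h : p.1 ≤ q.1) :
    B.gmulB p q = B.star q.1 (B.rho q.1 p) q := by
  rw [gmulB, max_eq_right h, B.rho_of_le (p := q) le_rfl]

theorem gmulB_of_fst_ge {p q : K × Λ × Bool} (h : q.1 ≤ p.1) :
    B.gmulB p q = B.star p.1 p (B.rho p.1 q) := by
  rw [gmulB, max_eq_left h, B.rho_of_le (p := p) le_rfl]

theorem gmulB_of_fst_eq {u : K} {a b : Λ} {α β : Bool} :
    B.gmulB (u, a, α) (u, b, β) = B.star u (u, a, α) (u, b, β) := by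
  rw [B.gmulB_of_fst_le (p := (u, a, α)) (q := (u, b, β)) le_rfl,
    B.rho_of_le (p := (u, a, α)) le_rfl]

theorem gmulB_of_mem_KI_of_mem_H {u : K} (hKI : u ∈ B.KI) {a b : Λ} (α β : Bool)
    (hm : B.mul u a b ∈ B.H u)
    (hd : ¬(a ∈ B.H u ∧ α = false ∧ b ∈ B.H u ∧ β = false)) :
    B.gmulB (u, a, α) (u, b, β) = (u, B.mul u a b, true) := by
  rw [B.gmulB_of_fst_eq, B.star_eq_dot ⟨hKI, hm, hd⟩]

theorem glt_of_fst_eq {p q : K × Λ × Bool} (h : p.1 = q.1) : B.glt p q ↔ B.llt p.1 p q := by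
  rw [glt, h, max_self, B.rho_of_le h.ge, B.rho_of_le le_rfl]
  simp only [lt_irrefl, and_false, or_false]

theorem glt_dot (u : K) (z : Λ) : B.glt (u, z, true) (u, z, false) :=
  (B.glt_of_fst_eq (p := (u, z, true)) (q := (u, z, false)) rfl).2 (Or.inr ⟨rfl, rfl, rfl⟩)

theorem glt_of_fst_lt {p q : K × Λ × Bool} (h : p.1 < q.1) :
    B.glt p q ↔ B.llt q.1 (B.rho q.1 p) q ∨ B.rho q.1 p = q := by
  rw [glt, max_eq_right h.le, B.rho_of_le (p := q) le_rfl, and_iff_left h]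

theorem glt_of_fst_gt {p q : K × Λ × Bool} (h : q.1 < p.1) :
    B.glt p q ↔ B.llt p.1 p (B.rho p.1 q) := by
  rw [glt, max_eq_left h.le, B.rho_of_le (p := p) le_rfl]
  simp only [h.not_gt, and_false, or_false]

/-- The involutive FL_e-chain `X_𝒢`, as chain operations on `K × Λ × Bool`. -/
noncomputable def toChainOps : ChainOps (K × Λ × Bool) :=
  ⟨B.carrier, B.gmulB, B.impB, B.gle, B.tB, B.fB⟩

end BunchData

/-! ### Recovering the bunch from `X_𝒢` -/

namespace BunchData

variable {K : Type u} {Λ : Type v} [LinearOrder K] {B : BunchData K Λ} (hB : B.IsBunch)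
include hB

theorem unit_mul {u : K} {x : Λ} (hx : x ∈ B.G u) : B.mul u (B.unit u) x = x := by
  rw [hB.mul_comm' u _ (hB.unit_mem u) x hx, hB.mul_unit' u x hx]

theorem inv_mul_cancel_left {u : K} {x y : Λ} (hx : x ∈ B.G u) (hy : y ∈ B.G u) :
    B.mul u (B.inv u x) (B.mul u x y) = y := by
  have hix := hB.inv_mem u x hx
  rw [← hB.mul_assoc' u _ hix x hx y hy, hB.mul_comm' u _ hix x hx, hB.mul_inv' u x hx,
    unit_mul hB hy]

theorem mul_inv_cancel_left {u : K} {x y : Λ} (hx : x ∈ B.G u) (hy : y ∈ B.G u) :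
    B.mul u x (B.mul u (B.inv u x) y) = y := by
  rw [← hB.mul_assoc' u x hx _ (hB.inv_mem u x hx) y hy, hB.mul_inv' u x hx, unit_mul hB hy]

theorem mul_left_cancel {u : K} {x y z : Λ} (hx : x ∈ B.G u) (hy : y ∈ B.G u)
    (hz : z ∈ B.G u)    (h : B.mul u z x = B.mul u z y) : x = y := by
  rw [← inv_mul_cancel_left hB hz hx, h, inv_mul_cancel_left hB hz hy]

theorem inv_unit (u : K) : B.inv u (B.unit u) = B.unit u := by
  have h := hB.mul_inv' u _ (hB.unit_mem u)
  rwa [unit_mul hB (hB.inv_mem u _ (hB.unit_mem u))] at h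

theorem inv_inv {u : K} {x : Λ} (hx : x ∈ B.G u) : B.inv u (B.inv u x) = x := by
  have hix := hB.inv_mem u x hx
  refine mul_left_cancel hB (hB.inv_mem u _ hix) hx hix ?_
  rw [hB.mul_inv' u _ hix, hB.mul_comm' u _ hix x hx, hB.mul_inv' u x hx]

theorem inv_le_inv {u : K} {x y : Λ} (hx : x ∈ B.G u) (hy : y ∈ B.G u) (h : B.le u x y) :
    B.le u (B.inv u y) (B.inv u x) := by
  have hix := hB.inv_mem u x hx
  have hiy := hB.inv_mem u y hy
  have h' := hB.mul_le_mul' u x hx y hy _ (hB.mul_mem u _ hix _ hiy) h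
  rwa [hB.mul_comm' u _ (hB.mul_mem u _ hix _ hiy) x hx, mul_inv_cancel_left hB hx hiy,
    hB.mul_comm' u _ hix _ hiy, hB.mul_comm' u _ (hB.mul_mem u _ hiy _ hix) y hy,
    mul_inv_cancel_left hB hy hix] at h'

theorem inv_injective {u : K} {x y : Λ} (hx : x ∈ B.G u) (hy : y ∈ B.G u)
    (h : B.inv u x = B.inv u y) : x = y := by
  rw [← inv_inv hB hx, h, inv_inv hB hy]

theorem lowerCoverFn_spec {u : K} (hKJ : u ∈ B.KJ) {y : Λ} (hy : y ∈ B.G u) :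
    B.IsLowerCoverIn u (B.lowerCoverFn u y) y :=
  Classical.epsilon_spec (p := fun p => B.IsLowerCoverIn u p y) (hB.g3_disc u hKJ y hy).1

theorem isLowerCoverIn_mul {u : K} {x p y : Λ} (hx : x ∈ B.G u) (hy : y ∈ B.G u)
    (hp : B.IsLowerCoverIn u p y) : B.IsLowerCoverIn u (B.mul u x p) (B.mul u x y) := by
  obtain ⟨hpG, ⟨hple, hpne⟩, hpmax⟩ := hp
  have hix := hB.inv_mem u x hx
  refine ⟨hB.mul_mem u x hx p hpG, ⟨hB.mul_le_mul' u p hpG y hy x hx hple,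
    fun he => hpne (mul_left_cancel hB hpG hy hx he)⟩, fun z hz hlt => ?_⟩
  have hxz := hB.mul_mem u _ hix z hz
  have hzy : B.lt u (B.mul u (B.inv u x) z) y := by
    refine ⟨?_, fun he => hlt.2 (by rw [← he, mul_inv_cancel_left hB hx hz])⟩
    simpa only [inv_mul_cancel_left hB hx hy] using
      hB.mul_le_mul' u z hz _ (hB.mul_mem u x hx y hy) _ hix hlt.1
  simpa only [mul_inv_cancel_left hB hx hz] using
    hB.mul_le_mul' u _ hxz p hpG x hx (hpmax _ hxz hzy)

theorem lowerCoverFn_mul {u : K} (hKJ : u ∈ B.KJ) {x y : Λ} (hx : x ∈ B.G u)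
    (hy : y ∈ B.G u) :
    B.lowerCoverFn u (B.mul u x y) = B.mul u x (B.lowerCoverFn u y) :=
  B.lowerCoverFn_eq (hB.le_antisymm' u)
    (isLowerCoverIn_mul hB hx hy (lowerCoverFn_spec hB hKJ hy))

/-- The inverse of the lower cover of `y` is the upper cover of `y⁻¹`. -/
theorem lowerCoverFn_inv_lowerCoverFn {u : K} (hKJ : u ∈ B.KJ) {y : Λ} (hy : y ∈ B.G u) :
    B.lowerCoverFn u (B.inv u (B.lowerCoverFn u y)) = B.inv u y := by
  obtain ⟨hpG, ⟨hple, hpne⟩, hpmax⟩ := lowerCoverFn_spec hB hKJ hy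
  set p := B.lowerCoverFn u y
  have hipG := hB.inv_mem u p hpG
  refine B.lowerCoverFn_eq (hB.le_antisymm' u) ⟨hB.inv_mem u y hy, ⟨inv_le_inv hB hpG hy hple,
    fun he => hpne (inv_injective hB hy hpG he).symm⟩, fun z hz hlt => ?_⟩
  have hizG := hB.inv_mem u z hz
  have hpz : B.le u p (B.inv u z) := by
    simpa only [inv_inv hB hpG] using inv_le_inv hB hz hipG hlt.1
  have hpz' : p ≠ B.inv u z := fun he => hlt.2 (by rw [he, inv_inv hB hz])
  rcases hB.le_total' u _ hizG y hy with h | h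
  · rcases eq_or_ne (B.inv u z) y with he | hne
    · rw [← he, inv_inv hB hz]; exact hB.le_refl' u z hz
    · exact absurd (hB.le_antisymm' u p hpG _ hizG hpz (hpmax _ hizG ⟨h, hne⟩)) hpz'
  · simpa only [inv_inv hB hz] using inv_le_inv hB hy hizG h

theorem rho_unit {u v : K} (huv : u ≤ v) :
    B.rho v (u, B.unit u, false) = (v, B.unit v, false) := by
  rcases huv.eq_or_lt with rfl | hlt
  · exact B.rho_of_le (p := (u, B.unit u, false)) le_rfl
  · rw [B.rho_of_lt (p := (u, B.unit u, false)) hlt]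
    exact congrArg (v, ·, false) (hB.tr_unit u v huv)

theorem snd_mem_G_of_mem_carrier {p : K × Λ × Bool} (hp : p ∈ B.carrier) :
    p.2.1 ∈ B.G p.1 := by
  rcases hp with ⟨-, h⟩ | ⟨-, hKI, hH⟩
  exacts [h, (hB.g2_sub p.1 hKI).1 hH]

theorem notMem_KI_of_mem_Ko {u : K} (h : u ∈ B.Ko) : u ∉ B.KI :=
  fun h' => hB.disjOI u ⟨h, h'⟩

theorem notMem_KJ_of_mem_Ko {u : K} (h : u ∈ B.Ko) : u ∉ B.KJ :=
  fun h' => hB.disjOJ u ⟨h, h'⟩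

theorem notMem_KI_of_mem_KJ {u : K} (h : u ∈ B.KJ) : u ∉ B.KI :=
  fun h' => hB.disjJI u ⟨h, h'⟩

theorem negB_unit_of_mem_Ko {u : K} (h : u ∈ B.Ko) :
    B.negB (u, B.unit u, false) = (u, B.unit u, false) := by
  rw [B.negB_of_notMem_H (fun h' => notMem_KI_of_mem_Ko hB h h'.1) (notMem_KJ_of_mem_Ko hB h),
    inv_unit hB]

theorem negB_unit_of_mem_KI {u : K} (h : u ∈ B.KI) :
    B.negB (u, B.unit u, false) = (u, B.unit u, true) := by
  rw [B.negB_of_mem_H h (hB.g2_sub u h).2.1, inv_unit hB]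

theorem negB_unit_of_mem_KJ {u : K} (h : u ∈ B.KJ) :
    B.negB (u, B.unit u, false) = (u, B.lowerCoverFn u (B.unit u), false) := by
  rw [B.negB_of_mem_KJ (notMem_KI_of_mem_KJ hB h) h, inv_unit hB]

theorem negB_negB_unit (u : K) : B.negB (B.negB (u, B.unit u, false)) = (u, B.unit u, false) := by
  rcases hB.cover u with h | h | h
  · rw [negB_unit_of_mem_Ko hB h, negB_unit_of_mem_Ko hB h]
  · rw [negB_unit_of_mem_KJ hB h, B.negB_of_mem_KJ (notMem_KI_of_mem_KJ hB h) h,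
      lowerCoverFn_inv_lowerCoverFn hB h (hB.unit_mem u), inv_unit hB]
  · rw [negB_unit_of_mem_KI hB h, B.negB_dot h, inv_unit hB]

theorem gmulB_tB {p : K × Λ × Bool} (hp : p ∈ B.carrier) : B.gmulB p B.tB = p := by
  obtain ⟨w, z, d⟩ := p
  have hz : B.mul w z (B.unit w) = z := hB.mul_unit' w z (snd_mem_G_of_mem_carrier hB hp)
  rw [gmulB, show max (w, z, d).1 B.tB.1 = w from max_eq_left (hB.t_least w),
    B.rho_of_le (p := (w, z, d)) le_rfl, tB, rho_unit hB (hB.t_least w)]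
  rcases hp with ⟨rfl, -⟩ | ⟨rfl, hKI, hH⟩
  · refine (B.star_eq_undot fun h => h.2.2 ⟨?_, rfl, (hB.g2_sub w h.1).2.1, rfl⟩).trans
      (by rw [hz])
    simpa only [hz] using h.2.1
  · refine (B.star_eq_dot ⟨hKI, ?_, fun h => Bool.noConfusion h.2.1⟩).trans (by rw [hz])
    simpa only [hz] using hH

theorem negB_fB : B.negB B.fB = B.tB := negB_negB_unit hB B.t

theorem impB_fB {p : K × Λ × Bool} (hp : p ∈ B.carrier) : B.impB p B.fB = B.negB p := by
  rw [impB, negB_fB hB, gmulB_tB hB hp]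

theorem gmulB_unit_self (u : K) :
    B.gmulB (u, B.unit u, false) (u, B.unit u, false) = (u, B.unit u, false) := by
  rw [B.gmulB_of_fst_le (p := (u, B.unit u, false)) le_rfl,
    B.rho_of_le (p := (u, B.unit u, false)) le_rfl,
    B.star_eq_undot fun h => h.2.2 ⟨(hB.g2_sub u h.1).2.1, rfl, (hB.g2_sub u h.1).2.1, rfl⟩,
    hB.mul_unit' u _ (hB.unit_mem u)]

theorem le_iff_gle_unit (u v : K) :
    u ≤ v ↔ B.gle (u, B.unit u, false) (v, B.unit v, false) := by
  refine ⟨fun huv => ?_, fun h => le_of_not_gt fun hvu => ?_⟩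
  · rcases huv.eq_or_lt with rfl | hlt
    · exact Or.inr rfl
    · exact Or.inl ((B.glt_of_fst_lt (p := (u, B.unit u, false)) hlt).2 (Or.inr (rho_unit hB huv)))
  · rcases h with h | h
    · rw [B.glt_of_fst_gt (q := (v, B.unit v, false)) hvu, rho_unit hB hvu.le] at h
      rcases h with ⟨-, hne⟩ | ⟨-, h, -⟩
      exacts [hne rfl, Bool.false_ne_true h]
    · exact hvu.ne (congrArg Prod.fst h).symm

theorem gmulB_unit_dot {u : K} {z : Λ} (hz : z ∈ B.G u) (d : Bool) :
    B.gmulB (u, z, d) (u, B.unit u, true) =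
      (u, z, decide (u ∈ B.KI ∧ z ∈ B.H u)) := by
  rw [B.gmulB_of_fst_eq]
  by_cases h : u ∈ B.KI ∧ z ∈ B.H u
  · rw [B.star_eq_dot ⟨h.1, by simpa only [hB.mul_unit' u z hz] using h.2,
      fun h' => Bool.noConfusion h'.2.2.2⟩, hB.mul_unit' u z hz, decide_eq_true h]
  · rw [B.star_eq_undot fun h' => h ⟨h'.1, by simpa only [hB.mul_unit' u z hz] using h'.2.1⟩,
      hB.mul_unit' u z hz, decide_eq_false h]

theorem impB_unit {u : K} {x : Λ} (hx : x ∈ B.G u) (d : Bool) :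
    B.impB (u, x, d) (u, B.unit u, false) = (u, B.inv u x, false) := by
  rw [impB]
  rcases hB.cover u with h | h | h
  · rw [negB_unit_of_mem_Ko hB h, B.gmulB_of_fst_eq,
      B.star_eq_undot_of_notMem_KI (notMem_KI_of_mem_Ko hB h), hB.mul_unit' u x hx,
      B.negB_of_notMem_H (fun h' => notMem_KI_of_mem_Ko hB h h'.1) (notMem_KJ_of_mem_Ko hB h)]
  · rw [negB_unit_of_mem_KJ hB h, B.gmulB_of_fst_eq,
      B.star_eq_undot_of_notMem_KI (notMem_KI_of_mem_KJ hB h)]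
    show B.negB (u, B.mul u x (B.lowerCoverFn u (B.unit u)), false) = _
    rw [← lowerCoverFn_mul hB h hx (hB.unit_mem u), hB.mul_unit' u x hx,
      B.negB_of_mem_KJ (notMem_KI_of_mem_KJ hB h) h, lowerCoverFn_inv_lowerCoverFn hB h hx]
  · rw [negB_unit_of_mem_KI hB h, gmulB_unit_dot hB hx]
    by_cases hxH : x ∈ B.H u
    · rw [decide_eq_true ⟨h, hxH⟩, B.negB_dot h]
    · rw [decide_eq_false fun h' => hxH h'.2, B.negB_of_notMem_H (fun h' => hxH h'.2)
        (fun h' => notMem_KI_of_mem_KJ hB h' h)]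

theorem gmulB_negB_self {p : K × Λ × Bool} (hp : p ∈ B.carrier) :
    B.gmulB p (B.negB p) = B.negB (p.1, B.unit p.1, false) := by
  obtain ⟨w, z, d⟩ := p
  have hzG : z ∈ B.G w := snd_mem_G_of_mem_carrier hB hp
  have hzi : B.mul w z (B.inv w z) = B.unit w := hB.mul_inv' w z hzG
  rcases hp with ⟨rfl, -⟩ | ⟨rfl, hKI, hzH⟩
  · rcases hB.cover w with h | h | h
    · rw [B.negB_of_notMem_H (fun h' => notMem_KI_of_mem_Ko hB h h'.1)
        (notMem_KJ_of_mem_Ko hB h), B.gmulB_of_fst_eq,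
        B.star_eq_undot_of_notMem_KI (notMem_KI_of_mem_Ko hB h)]
      exact (congrArg (w, ·, false) hzi).trans (negB_unit_of_mem_Ko hB h).symm
    · rw [B.negB_of_mem_KJ (notMem_KI_of_mem_KJ hB h) h, B.gmulB_of_fst_eq,
        B.star_eq_undot_of_notMem_KI (notMem_KI_of_mem_KJ hB h), negB_unit_of_mem_KJ hB h]
      show (w, B.mul w z (B.lowerCoverFn w (B.inv w z)), false) = _
      rw [← lowerCoverFn_mul hB h hzG (hB.inv_mem w z hzG), hzi]
    · have hu := (hB.g2_sub w h).2.1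
      rw [negB_unit_of_mem_KI hB h]
      by_cases hzH : z ∈ B.H w
      · rw [B.negB_of_mem_H h hzH, B.gmulB_of_mem_KI_of_mem_H h _ _ (hzi ▸ hu)
          (fun h' => Bool.noConfusion h'.2.2.2), hzi]
      · rw [B.negB_of_notMem_H (fun h' => hzH h'.2) (fun h' => notMem_KI_of_mem_KJ hB h' h),
          B.gmulB_of_mem_KI_of_mem_H h _ _ (hzi ▸ hu) (fun h' => hzH h'.1), hzi]
  · rw [B.negB_dot hKI, negB_unit_of_mem_KI hB hKI,
      B.gmulB_of_mem_KI_of_mem_H hKI _ _ (hzi ▸ (hB.g2_sub w hKI).2.1)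
        (fun h' => Bool.noConfusion h'.2.1), hzi]

theorem impB_self {p : K × Λ × Bool} (hp : p ∈ B.carrier) :
    B.impB p p = (p.1, B.unit p.1, false) := by
  rw [impB, gmulB_negB_self hB hp, negB_negB_unit hB]

theorem not_gle_tB_dot (w : K) : ¬ B.gle B.tB (w, B.unit w, true) := by
  rintro (h | h)
  · rcases (hB.t_least w).eq_or_lt with hw | hw
    · rw [tB, hw, B.glt_of_fst_eq (p := (w, B.unit w, false)) (q := (w, B.unit w, true)) rfl] at h
      rcases h with ⟨-, hne⟩ | ⟨-, h, -⟩
      exacts [hne rfl, Bool.noConfusion h]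
    · rw [B.glt_of_fst_lt (p := B.tB) (q := (w, B.unit w, true)) hw, tB, rho_unit hB hw.le] at h
      rcases h with (⟨-, hne⟩ | ⟨-, h, -⟩) | h
      exacts [hne rfl, Bool.noConfusion h, Bool.noConfusion (congrArg (·.2.2) h)]
  · exact Bool.noConfusion (congrArg (·.2.2) h)

theorem gmulB_unit_left {u v : K} (huv : u ≤ v) {x : Λ} (hx : x ∈ B.G u) :
    B.gmulB (v, B.unit v, false) (u, x, false) = (v, B.tr u v x, false) := by
  have hxv := hB.tr_mem u v huv x hx
  have hrho : B.rho v (u, x, false) = (v, B.tr u v x, false) := by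
    rcases huv.eq_or_lt with rfl | hlt
    · rw [B.rho_of_le (p := (u, x, false)) le_rfl, hB.tr_id u x hx]
    · exact B.rho_of_lt (p := (u, x, false)) hlt
  rw [B.gmulB_of_fst_ge (p := (v, B.unit v, false)) huv, hrho,
    B.star_eq_undot fun h => h.2.2 ⟨(hB.g2_sub v h.1).2.1, rfl, ?_, rfl⟩, unit_mul hB hxv]
  rcases huv.eq_or_lt with rfl | hlt
  · simpa only [unit_mul hB hxv] using h.2.1
  · exact hB.g2_tr v h.1 u hlt x hx

theorem unit_mem_carrier (u : K) : (u, B.unit u, false) ∈ B.carrier :=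
  Or.inl ⟨rfl, hB.unit_mem u⟩

theorem compl_toChainOps_unit (u : K) :
    B.toChainOps.compl (u, B.unit u, false) = B.negB (u, B.unit u, false) :=
  impB_fB hB (unit_mem_carrier hB u)

theorem unit_mem_kappa_toChainOps (u : K) : (u, B.unit u, false) ∈ B.toChainOps.kappa :=
  ⟨unit_mem_carrier hB u, (le_iff_gle_unit hB B.t u).1 (hB.t_least u), gmulB_unit_self hB u⟩

theorem kappa_toChainOps : B.toChainOps.kappa = Set.range fun u => (u, B.unit u, false) := by
  refine Set.Subset.antisymm ?_ (Set.range_subset_iff.2 (unit_mem_kappa_toChainOps hB))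
  rintro ⟨w, z, d⟩ ⟨hp, ht, hidem⟩
  have hzG : z ∈ B.G w := snd_mem_G_of_mem_carrier hB hp
  have hzz : B.mul w z z = z := by
    have h := congrArg (·.2.1) hidem
    change (B.gmulB (w, z, d) (w, z, d)).2.1 = z at h
    rwa [B.gmulB_of_fst_eq, B.snd_fst_star] at h
  obtain rfl : z = B.unit w :=
    mul_left_cancel hB hzG (hB.unit_mem w) hzG (hzz.trans (hB.mul_unit' w z hzG).symm)
  cases d
  · exact ⟨w, rfl⟩
  · exact absurd ht (not_gle_tB_dot hB w)

theorem isOdd_toChainOps_iff : B.toChainOps.isOdd ↔ B.t ∈ B.Ko := by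
  change B.impB (B.t, B.unit B.t, false) B.fB = (B.t, B.unit B.t, false) ↔ _
  rw [impB_fB hB (unit_mem_carrier hB B.t)]
  refine ⟨fun h => ?_, negB_unit_of_mem_Ko hB⟩
  rcases hB.cover B.t with h' | h' | h'
  · exact h'
  · rw [negB_unit_of_mem_KJ hB h'] at h
    exact absurd (congrArg (·.2.1) h) (lowerCoverFn_spec hB h' (hB.unit_mem _)).2.1.2
  · rw [negB_unit_of_mem_KI hB h'] at h
    exact Bool.noConfusion (congrArg (·.2.2) h)

theorem mem_Ko_iff (u : K) : u ∈ B.Ko ↔ (u, B.unit u, false) ∈ B.toChainOps.kappaO := by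
  refine ⟨fun h => ?_, fun ⟨he, hodd⟩ => ?_⟩
  · obtain rfl := hB.g1 h
    exact ⟨rfl, (isOdd_toChainOps_iff hB).2 h⟩
  · obtain rfl : u = B.t := congrArg Prod.fst he
    exact (isOdd_toChainOps_iff hB).1 hodd

theorem isIdem_compl_toChainOps_unit_iff (u : K) :
    B.toChainOps.IsIdem (B.toChainOps.compl (u, B.unit u, false)) ↔ u ∉ B.KJ := by
  change B.gmulB _ _ = _ ↔ _
  rw [compl_toChainOps_unit hB]
  rcases hB.cover u with h | h | h
  · rw [negB_unit_of_mem_Ko hB h]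
    exact iff_of_true (gmulB_unit_self hB u) (notMem_KJ_of_mem_Ko hB h)
  · refine iff_of_false (fun heq => ?_) (not_not.2 h)
    obtain ⟨hpG, ⟨-, hne⟩, -⟩ := lowerCoverFn_spec hB h (hB.unit_mem u)
    rw [negB_unit_of_mem_KJ hB h, B.gmulB_of_fst_eq,
      B.star_eq_undot_of_notMem_KI (notMem_KI_of_mem_KJ hB h)] at heq
    refine hne (mul_left_cancel hB hpG (hB.unit_mem u) hpG ?_)
    rw [hB.mul_unit' u _ hpG]
    exact congrArg (·.2.1) heq
  · rw [negB_unit_of_mem_KI hB h, gmulB_unit_dot hB (hB.unit_mem u),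
      decide_eq_true ⟨h, (hB.g2_sub u h).2.1⟩]
    exact iff_of_true rfl (fun h' => notMem_KI_of_mem_KJ hB h' h)

theorem mem_KJ_iff (u : K) : u ∈ B.KJ ↔ B.toChainOps.inKJ (u, B.unit u, false) :=
  ⟨fun h => ⟨unit_mem_kappa_toChainOps hB u,
      fun hi => (isIdem_compl_toChainOps_unit_iff hB u).1 hi h⟩,
    fun h => not_not.1 fun hn => h.2 ((isIdem_compl_toChainOps_unit_iff hB u).2 hn)⟩

theorem mem_KI_iff (u : K) : u ∈ B.KI ↔ B.toChainOps.inKI (u, B.unit u, false) := by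
  refine ⟨fun h => ⟨unit_mem_kappa_toChainOps hB u,
    (isIdem_compl_toChainOps_unit_iff hB u).2 fun h' => notMem_KI_of_mem_KJ hB h' h,
    fun h' => notMem_KI_of_mem_Ko hB ((mem_Ko_iff hB u).2 h') h⟩, fun ⟨_, hidem, hO⟩ => ?_⟩
  rcases hB.cover u with h | h | h
  · exact absurd ((mem_Ko_iff hB u).1 h) hO
  · exact absurd h ((isIdem_compl_toChainOps_unit_iff hB u).1 hidem)
  · exact h

theorem layer_toChainOps (u : K) :
    B.toChainOps.layer (u, B.unit u, false) = {p | p ∈ B.carrier ∧ p.1 = u} := by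
  ext p
  refine and_congr_right fun hp => ?_
  change B.impB p p = _ ↔ _
  rw [impB_self hB hp]
  exact ⟨congrArg Prod.fst, fun h => h ▸ rfl⟩

theorem mul_compl_toChainOps_unit {u : K} (hKI : u ∈ B.KI) {z : Λ} (hz : z ∈ B.G u)
    (d : Bool) :
    B.toChainOps.mul (u, z, d) (B.toChainOps.compl (u, B.unit u, false)) =
      (u, z, decide (z ∈ B.H u)) := by
  change B.gmulB _ (B.toChainOps.compl _) = _
  rw [compl_toChainOps_unit hB, negB_unit_of_mem_KI hB hKI, gmulB_unit_dot hB hz]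
  simp only [hKI, true_and]

theorem Hs_toChainOps {u : K} (hKI : u ∈ B.KI) :
    B.toChainOps.Hs (u, B.unit u, false) = (fun z => (u, z, false)) '' B.H u := by
  ext ⟨w, z, d⟩
  change (w, z, d) ∈ B.toChainOps.layer _ ∧ B.toChainOps.lt _ _ ↔ _
  rw [layer_toChainOps hB]
  constructor
  · rintro ⟨⟨hp, rfl⟩, -, hne⟩
    rw [mul_compl_toChainOps_unit hB hKI (snd_mem_G_of_mem_carrier hB hp)] at hne
    rcases hp with ⟨rfl, -⟩ | ⟨rfl, -, hzH⟩
    · by_cases hzH : z ∈ B.H w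
      · exact ⟨z, hzH, rfl⟩
      · exact absurd (by rw [decide_eq_false hzH]) hne
    · exact absurd (by rw [decide_eq_true hzH]) hne
  · rintro ⟨z, hzH, h⟩
    cases h
    have hzG := (hB.g2_sub u hKI).1 hzH
    refine ⟨⟨Or.inl ⟨rfl, hzG⟩, rfl⟩, ?_⟩
    rw [ChainOps.lt, mul_compl_toChainOps_unit hB hKI hzG, decide_eq_true hzH]
    exact ⟨Or.inl (B.glt_dot u z), fun h => Bool.noConfusion (congrArg (·.2.2) h)⟩

theorem dotH_toChainOps {u : K} (hKI : u ∈ B.KI) :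
    B.toChainOps.dotH (u, B.unit u, false) = (fun z => (u, z, true)) '' B.H u := by
  rw [ChainOps.dotH, Hs_toChainOps hB hKI, Set.image_image]
  refine Set.image_congr fun z hz => ?_
  rw [mul_compl_toChainOps_unit hB hKI ((hB.g2_sub u hKI).1 hz), decide_eq_true hz]

theorem Gs_toChainOps (u : K) :
    B.toChainOps.Gs (u, B.unit u, false) = (fun z => (u, z, false)) '' B.G u := by
  ext ⟨w, z, d⟩
  change (w, z, d) ∈ B.toChainOps.layer _ ∧ (B.toChainOps.inKI _ → _) ↔ _
  rw [layer_toChainOps hB, ← mem_KI_iff hB]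
  constructor
  · rintro ⟨⟨hp, rfl⟩, hnd⟩
    rcases hp with ⟨rfl, hzG⟩ | ⟨rfl, hKI, hzH⟩
    · exact ⟨z, hzG, rfl⟩
    · exact absurd (by rw [dotH_toChainOps hB hKI]; exact ⟨z, hzH, rfl⟩) (hnd hKI)
  · rintro ⟨z, hzG, h⟩
    cases h
    refine ⟨⟨Or.inl ⟨rfl, hzG⟩, rfl⟩, fun hKI => ?_⟩
    rw [dotH_toChainOps hB hKI]
    rintro ⟨_, _, h⟩
    exact Bool.noConfusion (congrArg (·.2.2) h)

theorem gmul_toChainOps {u : K} {x y : Λ} (hx : x ∈ B.G u) (hy : y ∈ B.G u) :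
    B.toChainOps.gmul (u, B.unit u, false) (u, x, false) (u, y, false) =
      (u, B.mul u x y, false) := by
  have hm := hB.mul_mem u x hx y hy
  unfold ChainOps.gmul
  split_ifs with hKI
  · change B.impB (B.impB (B.gmulB _ _) _) _ = _
    obtain ⟨d, hd⟩ : ∃ d, B.gmulB (u, x, false) (u, y, false) = (u, B.mul u x y, d) := by
      rw [B.gmulB_of_fst_eq]; unfold star; split_ifs
      exacts [⟨true, rfl⟩, ⟨false, rfl⟩]
    rw [hd, impB_unit hB hm, impB_unit hB (hB.inv_mem u _ hm), inv_inv hB hm]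
  · change B.gmulB _ _ = _
    rw [B.gmulB_of_fst_eq, B.star_eq_undot_of_notMem_KI fun h => hKI ((mem_KI_iff hB u).1 h)]

end BunchData

/-! ### Residuated chains and their layers -/

namespace FLe

variable {X : Type u} [FLeChain X]

theorem mul_le_iff_le_imp {x y z : X} : x * y ≤ z ↔ y ≤ imp x z := FLeChain.residuation x y z

theorem mul_imp_le (x z : X) : x * imp x z ≤ z := mul_le_iff_le_imp.2 le_rfl

instance : IsOrderedMonoid X where
  mul_le_mul_left a b h c := by
    rw [mul_comm a, mul_comm b]
    exact mul_le_iff_le_imp.2 (h.trans (mul_le_iff_le_imp.1 le_rfl))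

theorem imp_le_imp_right {a b : X} (c : X) (h : a ≤ b) : imp b c ≤ imp a c :=
  mul_le_iff_le_imp.1 ((mul_le_mul_left h _).trans (mul_imp_le b c))

theorem one_le_imp_self (x : X) : 1 ≤ imp x x := mul_le_iff_le_imp.1 (mul_one x).le

theorem imp_self_mul (x : X) : imp x x * x = x :=
  le_antisymm (mul_comm x (imp x x) ▸ mul_imp_le x x) (le_mul_of_one_le_left' (one_le_imp_self x))

theorem mul_eq_of_imp_self_eq {u x : X} (hx : imp x x = u) : u * x = x := hx ▸ imp_self_mul x

theorem mul_eq_self_iff_le_imp_self {x z : X} (hz : 1 ≤ z) : z * x = x ↔ z ≤ imp x x := by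
  refine ⟨fun h => mul_le_iff_le_imp.1 (by rw [mul_comm, h]), fun h => le_antisymm ?_ ?_⟩
  · exact (mul_le_mul_left h x).trans (imp_self_mul x).le
  · exact le_mul_of_one_le_left' hz

theorem imp_self_mul_le_iff (x y : X) : imp y y * x ≤ y ↔ x ≤ y :=
  ⟨(le_mul_of_one_le_left' (one_le_imp_self y)).trans,
    fun h => (mul_le_mul_right h _).trans (imp_self_mul y).le⟩

theorem imp_self_mem_kappa (x : X) : imp x x ∈ kappa X := by
  refine ⟨one_le_imp_self x, le_antisymm ?_ (le_mul_of_one_le_left' (one_le_imp_self x))⟩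
  refine mul_le_iff_le_imp.1 ?_
  rw [← mul_assoc, mul_comm x, imp_self_mul]
  exact mul_imp_le x x

theorem imp_self_of_mem_kappa {u : X} (hu : u ∈ kappa X) : imp u u = u :=
  le_antisymm ((le_mul_of_one_le_left' hu.1).trans (mul_imp_le u u))
    (mul_le_iff_le_imp.1 hu.2.le)

theorem one_imp (y : X) : imp 1 y = y :=
  le_antisymm (one_mul (imp 1 y) ▸ mul_imp_le 1 y) (mul_le_iff_le_imp.1 (one_mul y).le)

theorem compl_one : compl (1 : X) = fc X := one_imp _

theorem compl_anti {a b : X} (h : a ≤ b) : compl b ≤ compl a := imp_le_imp_right _ h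

theorem imp_mul (x y z : X) : imp (x * y) z = imp y (imp x z) := by
  refine le_antisymm (mul_le_iff_le_imp.1 (mul_le_iff_le_imp.1 ?_)) (mul_le_iff_le_imp.1 ?_)
  · rw [← mul_assoc]; exact mul_imp_le _ z
  · rw [mul_assoc]; exact (mul_le_mul_right (mul_imp_le y _) x).trans (mul_imp_le x z)

theorem mul_compl_mul_compl {u : X} (hidem : IsIdem (compl u)) (z : X) :
    z * compl u * compl u = z * compl u := by
  rw [mul_assoc, hidem]

theorem notMem_dotH_of_mem_Hs {u a : X} (hidem : IsIdem (compl u)) (ha : a ∈ Hs u) :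
    a ∉ dotH u := by
  rintro ⟨c, -, rfl⟩
  exact ha.2.ne (mul_compl_mul_compl hidem c)

theorem mem_Gs_of_mem_Hs {u a : X} (ha : a ∈ Hs u) : a ∈ Gs u :=
  ⟨ha.1, fun hKI => notMem_dotH_of_mem_Hs hKI.2.1 ha⟩

theorem mem_Gs_of_not_inKI {u a : X} (ha : imp a a = u) (hKI : ¬ inKI u) : a ∈ Gs u :=
  ⟨ha, fun h => absurd h hKI⟩

section Involutive

variable (hinv : Involutive X)
include hinv

theorem compl_le_compl_iff {a b : X} : compl b ≤ compl a ↔ a ≤ b :=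
  ⟨fun h => hinv a ▸ hinv b ▸ compl_anti h, compl_anti⟩

theorem compl_lt_compl_iff {a b : X} : compl b < compl a ↔ a < b := by
  simp only [lt_iff_not_ge, compl_le_compl_iff hinv]

theorem imp_eq_compl_mul_compl (x y : X) : imp x y = compl (x * compl y) := by
  rw [mul_comm, compl, imp_mul, ← compl, hinv]

theorem le_iff_mul_compl_le {x y : X} : x ≤ y ↔ x * compl y ≤ fc X :=
  (compl_le_compl_iff hinv).symm.trans mul_le_iff_le_imp.symm

theorem lt_iff_fc_lt_mul_compl {x y : X} : y < x ↔ fc X < x * compl y := by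
  rw [lt_iff_not_ge, lt_iff_not_ge, le_iff_mul_compl_le hinv]

theorem imp_self_compl (x : X) : imp (compl x) (compl x) = imp x x := by
  rw [imp_eq_compl_mul_compl hinv, imp_eq_compl_mul_compl hinv x, hinv, mul_comm]

end Involutive

section OddOrEven

variable (hoe : OddChain X ∨ EvenChain X)
include hoe

theorem fc_le_one : fc X ≤ 1 := by
  rcases hoe with h | h
  · rw [← compl_one, h]
  · exact ((h (fc X)).2 le_rfl).le

theorem one_le_of_fc_lt {a : X} (h : fc X < a) : 1 ≤ a := by
  rcases hoe with ho | he
  · rw [← compl_one, ho] at h; exact h.le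
  · exact not_lt.1 fun ha => h.not_ge ((he a).1 ha)

theorem mul_compl_le_self {u : X} (hu : 1 ≤ u) (x : X) : x * compl u ≤ x :=
  mul_le_of_le_one_right' ((compl_anti hu).trans (compl_one (X := X) ▸ fc_le_one hoe))

theorem mul_compl_lt_of_mem_Hs {u a : X} (ha : a ∈ Hs u) : u * compl u < u := by
  refine (mul_compl_le_self hoe (ha.1 ▸ one_le_imp_self a) u).lt_of_ne fun h => ha.2.ne ?_
  rw [← mul_eq_of_imp_self_eq ha.1, mul_right_comm, h]

theorem mem_Hs_of_mul_eq {v z w : X} (hz : imp z z = v) (hv : v * compl v < v)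
    (hw : z * w = v) : z ∈ Hs v := by
  refine ⟨hz, (mul_compl_le_self hoe (hz ▸ one_le_imp_self z) z).lt_of_ne fun h => hv.ne ?_⟩
  have : z * compl v * w = v * compl v := by rw [mul_right_comm, hw]
  rw [← this, h, hw]

theorem mul_compl_eq_of_notMem_Hs {u a : X} (ha : imp a a = u) (hnH : a ∉ Hs u) :
    a * compl u = a :=
  (mul_compl_le_self hoe (ha ▸ one_le_imp_self a) a).eq_of_not_lt fun h => hnH ⟨ha, h⟩

end OddOrEven

section OddOrEvenInvolutive

variable (hinv : Involutive X) (hoe : OddChain X ∨ EvenChain X)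
include hinv hoe

theorem one_le_mul_compl_of_lt {x y : X} (h : y < x) : 1 ≤ x * compl y :=
  one_le_of_fc_lt hoe ((lt_iff_fc_lt_mul_compl hinv).1 h)

theorem one_le_mul_imp_of_mul_compl_lt {x u : X} (h : x * compl u < x) : 1 ≤ x * imp x u := by
  simpa only [hinv, imp_eq_compl_mul_compl hinv x u] using one_le_mul_compl_of_lt hinv hoe h

theorem imp_self_mul_of_le {x y : X} (h : imp x x ≤ imp y y) :
    imp (x * y) (x * y) = imp y y := by
  set w := imp (x * y) (x * y)
  have hw : 1 ≤ w := one_le_imp_self _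
  have hwxy : w * (x * y) = x * y := imp_self_mul _
  have hyw : imp y y ≤ w := by
    rw [← mul_eq_self_iff_le_imp_self ((one_le_imp_self x).trans h), mul_left_comm, imp_self_mul]
  refine (hyw.eq_or_lt.resolve_right fun hlt => hlt.not_ge (h.trans' ?_)).symm
  -- `w` moves `y'`, hence `w y' y ≥ t`, and this forces `w x = x`
  have hwy : compl y < w * compl y := by
    refine (le_mul_of_one_le_left' hw).lt_of_ne fun heq => hlt.not_ge ?_
    rw [← imp_self_compl hinv y]
    exact (mul_eq_self_iff_le_imp_self hw).1 heq.symm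
  have h1 : 1 ≤ w * compl y * y := by
    simpa only [hinv y] using one_le_mul_compl_of_lt hinv hoe hwy
  have hx : x * y * compl y = x := by
    refine le_antisymm ?_ ?_
    · rw [mul_assoc]
      exact (mul_le_mul_right ((mul_imp_le y _).trans (fc_le_one hoe)) x).trans (mul_one x).le
    · calc x ≤ x * (w * compl y * y) := le_mul_of_one_le_right' h1
        _ = w * (x * y) * compl y := by ac_rfl
        _ = x * y * compl y := by rw [hwxy]
  refine (mul_eq_self_iff_le_imp_self hw).1 ?_
  calc w * x = w * (x * y * compl y) := by rw [hx]
    _ = w * (x * y) * compl y := by ac_rfl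
    _ = x := by rw [hwxy, hx]

theorem imp_self_mul_eq_max (x y : X) : imp (x * y) (x * y) = max (imp x x) (imp y y) := by
  rcases le_total (imp x x) (imp y y) with h | h
  · rw [max_eq_right h, imp_self_mul_of_le hinv hoe h]
  · rw [max_eq_left h, mul_comm, imp_self_mul_of_le hinv hoe h]

theorem mul_compl_eq_of_lt {u v : X} (hu : 1 ≤ u) (hv : v ∈ kappa X) (h : u < v) :
    v * compl u = v := by
  refine le_antisymm (mul_compl_le_self hoe hu v) ?_
  calc v ≤ v * (v * compl u) := le_mul_of_one_le_right' (one_le_mul_compl_of_lt hinv hoe h)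
    _ = v * compl u := by rw [← mul_assoc, hv.2]

theorem mul_imp_eq_of_mem_Hs {u x : X} (hx : x ∈ Hs u) : x * imp x u = u := by
  refine le_antisymm (mul_imp_le x u) ?_
  calc u ≤ u * (x * imp x u) :=
        le_mul_of_one_le_right' (one_le_mul_imp_of_mul_compl_lt hinv hoe hx.2)
    _ = x * imp x u := by rw [← mul_assoc, mul_eq_of_imp_self_eq hx.1]

theorem mul_mem_Hs_of_lt {x v : X} (hv : v ∈ kappa X) (hx : imp x x < v) : v * x ∈ Hs v := by
  have hxv : x * compl v < x := by
    refine (mul_compl_le_self hoe hv.1 x).lt_of_ne fun h => hx.ne ?_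
    rw [← h, imp_self_mul_eq_max hinv hoe, imp_self_compl hinv, imp_self_of_mem_kappa hv,
      max_eq_right hx.le]
  have hvx : v * x * imp x v = v := by
    refine le_antisymm ?_ ?_
    · rw [mul_assoc]; exact (mul_le_mul_right (mul_imp_le x v) v).trans hv.2.le
    · rw [mul_assoc]
      exact le_mul_of_one_le_right' (one_le_mul_imp_of_mul_compl_lt hinv hoe hxv)
  refine mem_Hs_of_mul_eq hoe ?_ ?_ hvx
  · rw [imp_self_mul_eq_max hinv hoe, imp_self_of_mem_kappa hv, max_eq_left hx.le]
  · refine (mul_compl_le_self hoe hv.1 v).lt_of_ne fun h => ?_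
    have hv1 : v ≤ 1 := h ▸ (mul_imp_le v _).trans (fc_le_one hoe)
    exact hx.not_ge (hv1.trans (one_le_imp_self x))

theorem le_mul_compl_of_lt {u b z : X} (hb : b ∈ Hs u) (hz : imp z z = u) (hlt : z < b) :
    z ≤ b * compl u := by
  have h : z * imp b u ≤ fc X := by
    refine not_lt.1 fun hc => hlt.not_ge ?_
    calc b ≤ z * imp b u * b := le_mul_of_one_le_left' (one_le_of_fc_lt hoe hc)
      _ = u * z := by rw [mul_right_comm, mul_assoc, mul_imp_eq_of_mem_Hs hinv hoe hb, mul_comm]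
      _ = z := mul_eq_of_imp_self_eq hz
  rwa [← hinv (b * compl u), ← imp_eq_compl_mul_compl hinv, compl, ← mul_le_iff_le_imp,
    mul_comm]

theorem lt_mul_compl_iff {u a b : X} (hKI : inKI u) (ha : a ∈ Gs u) (hb : b ∈ Hs u) :
    a < b * compl u ↔ a < b :=
  ⟨fun h => h.trans_le (mul_compl_le_self hoe hKI.1.1 b),
    fun h => (le_mul_compl_of_lt hinv hoe hb ha.1 h).lt_of_ne
      fun he => ha.2 hKI ⟨b, hb, he.symm⟩⟩

theorem mul_compl_lt_iff {u a b : X} (ha : a ∈ Hs u) (hb : imp b b = u) :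
    a * compl u < b ↔ a ≤ b :=
  ⟨fun h => not_lt.1 fun hba => (le_mul_compl_of_lt hinv hoe ha hb hba).not_gt h,
    fun h => ha.2.trans_le h⟩

theorem mul_compl_lt_mul_compl_iff {u a b : X} (ha : a ∈ Hs u) (hb : b ∈ Hs u) :
    a * compl u < b * compl u ↔ a < b :=
  ⟨fun h => not_le.1 fun hba => (mul_le_mul_left hba _).not_gt h,
    fun h => ha.2.trans_le (le_mul_compl_of_lt hinv hoe hb ha.1 h)⟩

theorem mul_compl_lt_of_not_idem {u z : X} (hJ : ¬ IsIdem (compl u)) (hz : imp z z = u) :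
    z * compl u < z := by
  refine (mul_compl_le_self hoe (hz ▸ one_le_imp_self z) z).lt_of_ne fun hA => hJ ?_
  have h1 : z * compl z = compl u := by
    rw [← hz, imp_eq_compl_mul_compl hinv, hinv]
  calc compl u * compl u = z * compl u * compl z := by rw [← h1]; ac_rfl
    _ = compl u := by rw [hA, h1]

theorem compl_isLowerCover_imp_of_not_idem {u z : X} (hJ : ¬ IsIdem (compl u))
    (hz : imp z z = u) :
    compl z < imp z u ∧ ∀ w, imp w w = u → w < imp z u → w ≤ compl z := by
  have hH : z * compl u < z := mul_compl_lt_of_not_idem hinv hoe hJ hz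
  refine ⟨?_, fun w hw hlt => not_lt.1 fun hc => hlt.not_ge ?_⟩
  · rwa [imp_eq_compl_mul_compl hinv, compl_lt_compl_iff hinv]
  · calc imp z u ≤ w * z * imp z u :=
          le_mul_of_one_le_left' (hinv z ▸ one_le_mul_compl_of_lt hinv hoe hc)
      _ = u * w := by rw [mul_assoc, mul_imp_eq_of_mem_Hs hinv hoe ⟨hz, hH⟩, mul_comm]
      _ = w := mul_eq_of_imp_self_eq hw

theorem imp_self_mul_compl {u z : X} (hu : u ∈ kappa X) (hz : imp z z = u) :
    imp (z * compl u) (z * compl u) = u := by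
  rw [imp_self_mul_eq_max hinv hoe, hz, imp_self_compl hinv, imp_self_of_mem_kappa hu, max_self]

theorem imp_self_imp {u a : X} (hu : u ∈ kappa X) (ha : imp a a = u) :
    imp (imp a u) (imp a u) = u := by
  rw [imp_eq_compl_mul_compl hinv a u, imp_self_compl hinv, imp_self_mul_compl hinv hoe hu ha]

theorem imp_mem_Hs {u a : X} (ha : a ∈ Hs u) : imp a u ∈ Hs u := by
  refine mem_Hs_of_mul_eq hoe ?_ (mul_compl_lt_of_mem_Hs hoe ha) (w := a) ?_
  · exact imp_self_imp hinv hoe (ha.1 ▸ imp_self_mem_kappa a) ha.1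
  · rw [mul_comm, mul_imp_eq_of_mem_Hs hinv hoe ha]

theorem imp_imp_of_mem_Hs {u a : X} (ha : a ∈ Hs u) : imp (imp a u) u = a := by
  have hb := imp_mem_Hs hinv hoe ha
  have hu : u ∈ kappa X := ha.1 ▸ imp_self_mem_kappa a
  calc imp (imp a u) u = u * imp (imp a u) u :=
        (mul_eq_of_imp_self_eq (imp_self_imp hinv hoe hu hb.1)).symm
    _ = a * imp a u * imp (imp a u) u := by rw [mul_imp_eq_of_mem_Hs hinv hoe ha]
    _ = a := by rw [mul_assoc, mul_imp_eq_of_mem_Hs hinv hoe hb, mul_comm,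
          mul_eq_of_imp_self_eq ha.1]

theorem compl_eq_imp_mul_compl {u a : X} (ha : a ∈ Hs u) : compl a = imp a u * compl u := by
  rw [← hinv (imp a u * compl u), ← imp_eq_compl_mul_compl hinv, imp_imp_of_mem_Hs hinv hoe ha]

theorem mul_mem_Hs {u a b : X} (ha : a ∈ Hs u) (hb : b ∈ Hs u) : a * b ∈ Hs u := by
  have hu : u ∈ kappa X := ha.1 ▸ imp_self_mem_kappa a
  refine mem_Hs_of_mul_eq hoe ?_ (mul_compl_lt_of_mem_Hs hoe ha) (w := imp a u * imp b u) ?_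
  · rw [imp_self_mul_eq_max hinv hoe, ha.1, hb.1, max_self]
  · rw [mul_mul_mul_comm, mul_imp_eq_of_mem_Hs hinv hoe ha, mul_imp_eq_of_mem_Hs hinv hoe hb, hu.2]

theorem compl_mul_compl_of_notMem_dotH {u z : X} (hz : imp z z = u) (hnd : z ∉ dotH u) :
    compl z * compl u = compl z := by
  refine mul_compl_eq_of_notMem_Hs hoe (by rw [imp_self_compl hinv, hz]) fun hH => hnd ?_
  refine ⟨imp (compl z) u, imp_mem_Hs hinv hoe hH, ?_⟩
  show imp (compl z) u * compl u = z
  rw [← compl_eq_imp_mul_compl hinv hoe hH, hinv]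

theorem compl_notMem_dotH_of_mul_compl {u z : X} (hA : z * compl u = z) : compl z ∉ dotH u := by
  rintro ⟨c, hc, hcz⟩
  have hzc : z = imp c u := by
    rw [← hinv z, ← hcz, ← imp_eq_compl_mul_compl hinv]
  exact (hzc ▸ imp_mem_Hs hinv hoe hc).2.ne hA

theorem imp_imp_mul_compl {u a : X} (hidem : IsIdem (compl u)) (ha : a ∈ Hs u) :
    imp (imp (a * compl u) u) u = a := by
  rw [imp_eq_compl_mul_compl hinv (a * compl u) u, mul_compl_mul_compl hidem,
    ← imp_eq_compl_mul_compl hinv, imp_imp_of_mem_Hs hinv hoe ha]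

theorem imp_imp_of_mul_compl_eq {u z : X} (hz : imp z z = u) (hA : z * compl u = z)
    (hnd : z ∉ dotH u) : imp (imp z u) u = z := by
  rw [imp_eq_compl_mul_compl hinv z u, hA, imp_eq_compl_mul_compl hinv _ u,
    compl_mul_compl_of_notMem_dotH hinv hoe hz hnd, hinv]

end OddOrEvenInvolutive

/-! ### The representation `X ≅ X_{(𝒢_X)}` -/

/-- The element of `X_{𝒢_X}` representing `x`: an element of `G_u` stays put, and
`x = a · u' ∈ •H_u` becomes the dotted copy of `a = x' → u`. -/
noncomputable def toGlued (x : X) : kappaT X × X × Bool :=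
  if x ∈ Gs (imp x x) then (⟨imp x x, imp_self_mem_kappa x⟩, x, false)
  else (⟨imp x x, imp_self_mem_kappa x⟩, imp (compl x) (imp x x), true)

noncomputable def ofGlued (p : kappaT X × X × Bool) : X :=
  if p.2.2 then p.2.1 * compl (p.1 : X) else p.2.1

theorem coe_fst_toGlued (x : X) : ((toGlued x).1 : X) = imp x x := by
  unfold toGlued; split_ifs <;> rfl

theorem fst_toGlued_eq_iff {x y : X} : (toGlued x).1 = (toGlued y).1 ↔ imp x x = imp y y := by
  rw [Subtype.ext_iff, coe_fst_toGlued, coe_fst_toGlued]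

theorem fst_toGlued_lt_iff {x y : X} : (toGlued x).1 < (toGlued y).1 ↔ imp x x < imp y y := by
  rw [← Subtype.coe_lt_coe, coe_fst_toGlued, coe_fst_toGlued]

theorem fst_toGlued_le_iff {x y : X} : (toGlued x).1 ≤ (toGlued y).1 ↔ imp x x ≤ imp y y := by
  rw [← Subtype.coe_le_coe, coe_fst_toGlued, coe_fst_toGlued]

theorem toGlued_of_mem_Gs {u x : X} (hu : u ∈ kappa X) (hx : imp x x = u) (hG : x ∈ Gs u) :
    toGlued x = (⟨u, hu⟩, x, false) := by
  subst hx; exact if_pos hG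

theorem toGlued_of_notMem_Gs {u x : X} (hu : u ∈ kappa X) (hx : imp x x = u) (hG : x ∉ Gs u) :
    toGlued x = (⟨u, hu⟩, imp (compl x) u, true) := by
  subst hx; exact if_neg hG

theorem exists_ofGlued_eq (x : X) : ∃ p ∈ (bunchOfChain X).carrier, ofGlued p = x := by
  by_cases hG : x ∈ Gs (imp x x)
  · exact ⟨(⟨_, imp_self_mem_kappa x⟩, x, false), Or.inl ⟨rfl, hG⟩, rfl⟩
  · have hKI : inKI (imp x x) := by_contra fun h => hG ⟨rfl, fun hKI => absurd hKI h⟩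
    obtain ⟨a, ha, hax⟩ : x ∈ dotH (imp x x) := by_contra fun h => hG ⟨rfl, fun _ => h⟩
    exact ⟨(⟨_, imp_self_mem_kappa x⟩, a, true), Or.inr ⟨rfl, hKI, ha⟩, hax⟩

theorem ofGlued_mul_compl {p : kappaT X × X × Bool}
    (hp : p ∈ (bunchOfChain X).carrier) :
    ofGlued p * compl (p.1 : X) = p.2.1 * compl (p.1 : X) := by
  rcases hp with ⟨hd, -⟩ | ⟨hd, hKI, -⟩
  · simp only [ofGlued, hd, Bool.false_eq_true, if_false]
  · simp only [ofGlued, hd, if_true, mul_compl_mul_compl hKI.2.1]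

theorem imp_self_of_mem_carrier {p : kappaT X × X × Bool} (hp : p ∈ (bunchOfChain X).carrier) :
    imp p.2.1 p.2.1 = p.1 := by
  rcases hp with ⟨-, hG⟩ | ⟨-, -, hH⟩
  exacts [hG.1, hH.1]

theorem ofGlued_eq_of_notMem_Hs {p : kappaT X × X × Bool} (hp : p ∈ (bunchOfChain X).carrier)
    (hH : p.2.1 ∉ Hs (p.1 : X)) : ofGlued p = p.2.1 := by
  rcases hp with ⟨hd, -⟩ | ⟨-, -, ha⟩
  · simp only [ofGlued, hd, Bool.false_eq_true, if_false]
  · exact absurd ha hH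

theorem ofGlued_mul_ofGlued_of_notMem_Hs (hoe : OddChain X ∨ EvenChain X)
    {p q : kappaT X × X × Bool}
    (hp : p ∈ (bunchOfChain X).carrier) (hq : q ∈ (bunchOfChain X).carrier) (hpq : p.1 = q.1)
    (hH : p.2.1 ∉ Hs (p.1 : X)) :
    ofGlued p * ofGlued q = p.2.1 * q.2.1 ∧
      ofGlued p * ofGlued q * compl (p.1 : X) = ofGlued p * ofGlued q := by
  have hp' := ofGlued_eq_of_notMem_Hs hp hH
  have hA := mul_compl_eq_of_notMem_Hs hoe (imp_self_of_mem_carrier hp) hH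
  have hq' := ofGlued_mul_compl hq
  rw [← hpq] at hq'
  have hz : ofGlued p * ofGlued q = p.2.1 * q.2.1 :=
    calc ofGlued p * ofGlued q = p.2.1 * (ofGlued q * compl (p.1 : X)) := by
          rw [hp', mul_comm (ofGlued q), ← mul_assoc, hA]
      _ = p.2.1 * q.2.1 := by rw [hq', mul_comm q.2.1, ← mul_assoc, hA]
  refine ⟨hz, ?_⟩
  rw [hz, mul_right_comm, hA]

theorem gmul_of_inKI {u : X} (hKI : inKI u) (a b : X) : gmul u a b = imp (imp (a * b) u) u :=
  if_pos hKI

theorem gmul_of_not_inKI {u : X} (hKI : ¬ inKI u) (a b : X) : gmul u a b = a * b := if_neg hKI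

theorem toGlued_one : toGlued (1 : X) = (bunchOfChain X).tB := by
  have h1 : imp (1 : X) 1 = 1 := one_imp 1
  refine toGlued_of_mem_Gs _ h1 ⟨h1, fun hKI ⟨a, _, ha⟩ => hKI.2.2 ⟨rfl, ?_⟩⟩
  change a * compl 1 = 1 at ha
  calc compl (1 : X) = a * compl 1 * compl 1 := by rw [ha, one_mul]
    _ = 1 := by rw [mul_compl_mul_compl hKI.2.1, ha]

section OddOrEvenInvolutive

variable (hinv : Involutive X) (hoe : OddChain X ∨ EvenChain X)
include hinv hoe

theorem toGlued_mul_compl {u a : X} (hu : u ∈ kappa X) (hKI : inKI u) (ha : a ∈ Hs u) :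
    toGlued (a * compl u) = (⟨u, hu⟩, a, true) := by
  rw [toGlued_of_notMem_Gs hu (imp_self_mul_compl hinv hoe hu ha.1)
    (fun hG => hG.2 hKI ⟨a, ha, rfl⟩), ← imp_eq_compl_mul_compl hinv,
    imp_imp_of_mem_Hs hinv hoe ha]

theorem toGlued_ofGlued {p : kappaT X × X × Bool} (hp : p ∈ (bunchOfChain X).carrier) :
    toGlued (ofGlued p) = p := by
  obtain ⟨⟨u, hu⟩, a, d⟩ := p
  rcases hp with ⟨rfl, hG⟩ | ⟨rfl, hKI, ha⟩
  · exact toGlued_of_mem_Gs hu hG.1 hG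
  · exact toGlued_mul_compl hinv hoe hu hKI ha

theorem toGlued_mem_carrier (x : X) : toGlued x ∈ (bunchOfChain X).carrier := by
  obtain ⟨p, hp, rfl⟩ := exists_ofGlued_eq x
  rwa [toGlued_ofGlued hinv hoe hp]

theorem ofGlued_toGlued (x : X) : ofGlued (toGlued x) = x := by
  obtain ⟨p, hp, rfl⟩ := exists_ofGlued_eq x
  rw [toGlued_ofGlued hinv hoe hp]

theorem llt_iff_ofGlued_lt {p q : kappaT X × X × Bool} (hp : p ∈ (bunchOfChain X).carrier)
    (hq : q ∈ (bunchOfChain X).carrier) (hpq : p.1 = q.1) :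
    (bunchOfChain X).llt p.1 p q ↔ ofGlued p < ofGlued q := by
  obtain ⟨⟨u, hu⟩, a, α⟩ := p
  obtain ⟨w, b, β⟩ := q
  obtain rfl : w = ⟨u, hu⟩ := hpq.symm
  rcases hp with ⟨rfl, haG⟩ | ⟨rfl, hKI, ha⟩ <;>
    rcases hq with ⟨rfl, hbG⟩ | ⟨rfl, hKI', hb⟩ <;>
    simp only [BunchData.llt, BunchData.lt, bunchOfChain, ofGlued, ← lt_iff_le_and_ne,
      Bool.false_eq_true, Bool.true_eq_false, if_true, if_false, and_true, and_false, or_false]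
  · exact (lt_mul_compl_iff hinv hoe hKI' haG hb).symm
  · rw [← le_iff_lt_or_eq, mul_compl_lt_iff hinv hoe ha hbG.1]
  · exact (mul_compl_lt_mul_compl_iff hinv hoe ha hb).symm

theorem toGlued_injective : Function.Injective (toGlued : X → kappaT X × X × Bool) :=
  Function.LeftInverse.injective (ofGlued_toGlued hinv hoe)

theorem rho_toGlued_of_lt {x y : X} (h : imp x x < imp y y) :
    (bunchOfChain X).rho (toGlued y).1 (toGlued x) = ((toGlued y).1, imp y y * x, false) := by
  rw [BunchData.rho_of_lt _ (fst_toGlued_lt_iff.2 h)]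
  show ((toGlued y).1, ((toGlued y).1 : X) * (toGlued x).2.1, false) = _
  rw [coe_fst_toGlued]
  conv_rhs => rw [← ofGlued_toGlued hinv hoe x]
  unfold ofGlued
  split_ifs
  · rw [← mul_assoc, mul_right_comm, coe_fst_toGlued,
      mul_compl_eq_of_lt hinv hoe (one_le_imp_self x) (imp_self_mem_kappa y) h]
  · rfl

theorem rho_toGlued_mem_carrier_of_lt {x y : X} (h : imp x x < imp y y) :
    ((toGlued y).1, imp y y * x, false) ∈ (bunchOfChain X).carrier :=
  Or.inl ⟨rfl, show imp y y * x ∈ Gs ((toGlued y).1 : X) by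
    rw [coe_fst_toGlued]
    exact mem_Gs_of_mem_Hs (mul_mem_Hs_of_lt hinv hoe (imp_self_mem_kappa y) h)⟩

theorem glt_toGlued_iff_of_eq {x y : X} (h : imp x x = imp y y) :
    (bunchOfChain X).glt (toGlued x) (toGlued y) ↔ x < y := by
  have h1 : (toGlued x).1 = (toGlued y).1 := fst_toGlued_eq_iff.2 h
  rw [BunchData.glt_of_fst_eq _ h1, llt_iff_ofGlued_lt hinv hoe (toGlued_mem_carrier hinv hoe x)
    (toGlued_mem_carrier hinv hoe y) h1, ofGlued_toGlued hinv hoe, ofGlued_toGlued hinv hoe]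

theorem glt_toGlued_iff_of_lt {x y : X} (h : imp x x < imp y y) :
    (bunchOfChain X).glt (toGlued x) (toGlued y) ↔ x < y := by
  have hP := rho_toGlued_mem_carrier_of_lt hinv hoe h
  have hPy : ((toGlued y).1, imp y y * x, false) = toGlued y ↔ imp y y * x = y :=
    ⟨fun he => (congrArg ofGlued he).trans (ofGlued_toGlued hinv hoe y),
      fun he => (toGlued_ofGlued hinv hoe hP).symm.trans (congrArg toGlued he)⟩
  rw [BunchData.glt_of_fst_lt _ (fst_toGlued_lt_iff.2 h),
    rho_toGlued_of_lt hinv hoe h,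
    llt_iff_ofGlued_lt hinv hoe hP (toGlued_mem_carrier hinv hoe y) rfl,
    ofGlued_toGlued hinv hoe, hPy]
  show imp y y * x < y ∨ imp y y * x = y ↔ x < y
  rw [← le_iff_lt_or_eq, imp_self_mul_le_iff]
  exact ⟨fun hle => hle.lt_of_ne fun he => h.ne (by rw [he]), le_of_lt⟩

theorem glt_toGlued_iff_of_gt {x y : X} (h : imp y y < imp x x) :
    (bunchOfChain X).glt (toGlued x) (toGlued y) ↔ x < y := by
  have hQ := rho_toGlued_mem_carrier_of_lt hinv hoe h
  rw [BunchData.glt_of_fst_gt _ (fst_toGlued_lt_iff.2 h),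
    rho_toGlued_of_lt hinv hoe h,
    llt_iff_ofGlued_lt hinv hoe (toGlued_mem_carrier hinv hoe x) hQ rfl, ofGlued_toGlued hinv hoe]
  show x < imp x x * y ↔ x < y
  rw [← not_le, imp_self_mul_le_iff, not_le]

theorem le_iff_gle_toGlued (x y : X) :
    x ≤ y ↔ (bunchOfChain X).gle (toGlued x) (toGlued y) := by
  have hlt : x < y ↔ (bunchOfChain X).glt (toGlued x) (toGlued y) := by
    rcases lt_trichotomy (imp x x) (imp y y) with h | h | h
    exacts [(glt_toGlued_iff_of_lt hinv hoe h).symm, (glt_toGlued_iff_of_eq hinv hoe h).symm,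
      (glt_toGlued_iff_of_gt hinv hoe h).symm]
  rw [le_iff_lt_or_eq, BunchData.gle, hlt, (toGlued_injective hinv hoe).eq_iff]

theorem toGlued_ofGlued_mul_ofGlued_of_mem_Hs {u a b : X} (hu : u ∈ kappa X) (hKI : inKI u)
    (ha : a ∈ Hs u) (hb : b ∈ Hs u) (α β : Bool) :
    toGlued (ofGlued (⟨u, hu⟩, a, α) * ofGlued (⟨u, hu⟩, b, β)) =
      (bunchOfChain X).star ⟨u, hu⟩ (⟨u, hu⟩, a, α) (⟨u, hu⟩, b, β) := by
  have hm : a * b ∈ Hs u := mul_mem_Hs hinv hoe ha hb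
  have hg : gmul u a b = a * b := by rw [gmul_of_inKI hKI, imp_imp_of_mem_Hs hinv hoe hm]
  by_cases hd : α = false ∧ β = false
  · obtain ⟨rfl, rfl⟩ := hd
    rw [BunchData.star_eq_undot _ fun h => h.2.2 ⟨ha, rfl, hb, rfl⟩]
    exact (toGlued_of_mem_Gs hu hm.1 (mem_Gs_of_mem_Hs hm)).trans (by rw [← hg]; rfl)
  · rw [BunchData.star_eq_dot _ ⟨hKI, by show gmul u a b ∈ Hs u; rw [hg]; exact hm,
      fun h => hd ⟨h.2.1, h.2.2.2⟩⟩]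
    have hz : ofGlued (⟨u, hu⟩, a, α) * ofGlued (⟨u, hu⟩, b, β) = a * b * compl u := by
      cases α <;> cases β <;> simp only [ofGlued, Bool.false_eq_true, if_true, if_false]
      · exact absurd ⟨rfl, rfl⟩ hd
      · rw [mul_assoc]
      · rw [mul_right_comm]
      · rw [mul_mul_mul_comm, hKI.2.1]
    rw [hz, toGlued_mul_compl hinv hoe hu hKI hm]
    exact congrArg _ (by rw [← hg]; rfl)

theorem toGlued_ofGlued_mul_ofGlued_of_notMem_Hs {u a b : X} {hu : u ∈ kappa X} {α β : Bool}
    (hp : (⟨u, hu⟩, a, α) ∈ (bunchOfChain X).carrier)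
    (hq : (⟨u, hu⟩, b, β) ∈ (bunchOfChain X).carrier) (hKI : inKI u)
    (hab : ¬(a ∈ Hs u ∧ b ∈ Hs u)) :
    toGlued (ofGlued (⟨u, hu⟩, a, α) * ofGlued (⟨u, hu⟩, b, β)) =
      (bunchOfChain X).star ⟨u, hu⟩ (⟨u, hu⟩, a, α) (⟨u, hu⟩, b, β) := by
  have hab_layer : imp (a * b) (a * b) = u := by
    rw [imp_self_mul_eq_max hinv hoe, imp_self_of_mem_carrier hp, imp_self_of_mem_carrier hq,
      max_self]
  -- a factor outside `H_u` absorbs `u'`, hence so does the product, which is `a · b`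
  obtain ⟨hz, hA⟩ :
      ofGlued (⟨u, hu⟩, a, α) * ofGlued (⟨u, hu⟩, b, β) = a * b ∧ _ := by
    rcases not_and_or.1 hab with haH | hbH
    · exact ofGlued_mul_ofGlued_of_notMem_Hs hoe hp hq rfl haH
    · rw [mul_comm, mul_comm a]
      exact ofGlued_mul_ofGlued_of_notMem_Hs hoe hq hp rfl hbH
  rw [hz] at hA ⊢
  change a * b * compl u = a * b at hA
  have hg : gmul u a b = imp (imp (a * b) u) u := gmul_of_inKI hKI a b
  by_cases hdot : a * b ∈ dotH u
  · obtain ⟨c, hc, hcz⟩ := hdot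
    have hg' : gmul u a b = c := by
      rw [hg, ← hcz]; exact imp_imp_mul_compl hinv hoe hKI.2.1 hc
    rw [BunchData.star_eq_dot _ ⟨hKI, by show gmul u a b ∈ Hs u; rw [hg']; exact hc,
      fun h => hab ⟨h.1, h.2.2.1⟩⟩, ← hcz, toGlued_mul_compl hinv hoe hu hKI hc]
    exact congrArg _ (by rw [← hg']; rfl)
  · have hg' : gmul u a b = a * b := by
      rw [hg]; exact imp_imp_of_mul_compl_eq hinv hoe hab_layer hA hdot
    rw [BunchData.star_eq_undot _ fun h => (show gmul u a b ∈ Hs u from h.2.1).2.ne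
      (by rw [hg', hA])]
    exact (toGlued_of_mem_Gs hu hab_layer ⟨hab_layer, fun _ => hdot⟩).trans
      (by rw [← hg']; rfl)

theorem toGlued_ofGlued_mul_ofGlued {p q : kappaT X × X × Bool}
    (hp : p ∈ (bunchOfChain X).carrier) (hq : q ∈ (bunchOfChain X).carrier) (hpq : p.1 = q.1) :
    toGlued (ofGlued p * ofGlued q) = (bunchOfChain X).star p.1 p q := by
  obtain ⟨⟨u, hu⟩, a, α⟩ := p
  obtain ⟨w, b, β⟩ := q
  obtain rfl : w = ⟨u, hu⟩ := hpq.symm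
  by_cases hKI : inKI u
  · by_cases hab : a ∈ Hs u ∧ b ∈ Hs u
    · exact toGlued_ofGlued_mul_ofGlued_of_mem_Hs hinv hoe hu hKI hab.1 hab.2 α β
    · exact toGlued_ofGlued_mul_ofGlued_of_notMem_Hs hinv hoe hp hq hKI hab
  obtain ⟨rfl, haG⟩ : α = false ∧ a ∈ Gs u := hp.resolve_right fun h => hKI h.2.1
  obtain ⟨rfl, hbG⟩ : β = false ∧ b ∈ Gs u := hq.resolve_right fun h => hKI h.2.1
  have hab : imp (a * b) (a * b) = u := by
    rw [imp_self_mul_eq_max hinv hoe, haG.1, hbG.1, max_self]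
  rw [BunchData.star_eq_undot_of_notMem_KI _ hKI]
  exact (toGlued_of_mem_Gs hu hab (mem_Gs_of_not_inKI hab hKI)).trans
    (by rw [← gmul_of_not_inKI hKI]; rfl)

theorem toGlued_mul_of_le {x y : X} (h : imp x x ≤ imp y y) :
    toGlued (x * y) = (bunchOfChain X).gmulB (toGlued x) (toGlued y) := by
  set P := (bunchOfChain X).rho (toGlued y).1 (toGlued x)
  obtain ⟨hP, hP1, hPy⟩ : P ∈ (bunchOfChain X).carrier ∧ P.1 = (toGlued y).1 ∧
      ofGlued P * y = x * y := by
    rcases h.eq_or_lt with heq | hlt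
    · have h1 : (toGlued x).1 = (toGlued y).1 := fst_toGlued_eq_iff.2 heq
      rw [show P = toGlued x from BunchData.rho_of_le _ h1.ge]
      exact ⟨toGlued_mem_carrier hinv hoe x, h1, by rw [ofGlued_toGlued hinv hoe]⟩
    · rw [show P = _ from rho_toGlued_of_lt hinv hoe hlt]
      exact ⟨rho_toGlued_mem_carrier_of_lt hinv hoe hlt, rfl,
        by rw [show ofGlued ((toGlued y).1, imp y y * x, false) = imp y y * x from rfl,
          mul_right_comm, imp_self_mul, mul_comm]⟩
  have := toGlued_ofGlued_mul_ofGlued hinv hoe hP (toGlued_mem_carrier hinv hoe y)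
    (hP1.trans rfl)
  rw [ofGlued_toGlued hinv hoe, hPy, hP1] at this
  rw [this, BunchData.gmulB_of_fst_le _ (fst_toGlued_le_iff.2 h)]

theorem toGlued_mul (x y : X) :
    toGlued (x * y) = (bunchOfChain X).gmulB (toGlued x) (toGlued y) := by
  rcases le_total (imp x x) (imp y y) with h | h
  · exact toGlued_mul_of_le hinv hoe h
  · rw [mul_comm,
      BunchData.gmulB_comm _ (fun w a b => by simp only [bunchOfChain, gmul, mul_comm])]
    exact toGlued_mul_of_le hinv hoe h

theorem lowerCoverFn_imp_eq_compl {u z : X} (hu : u ∈ kappa X) (hJ : ¬ IsIdem (compl u))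
    (hz : imp z z = u) : (bunchOfChain X).lowerCoverFn ⟨u, hu⟩ (imp z u) = compl z := by
  obtain ⟨hlt, hmax⟩ := compl_isLowerCover_imp_of_not_idem hinv hoe hJ hz
  refine BunchData.lowerCoverFn_eq _ (fun _ _ _ _ => le_antisymm) ⟨?_, ⟨hlt.le, hlt.ne⟩,
    fun w hw hwlt => hmax w hw.1 (lt_of_le_of_ne hwlt.1 hwlt.2)⟩
  exact mem_Gs_of_not_inKI (by rw [imp_self_compl hinv, hz]) fun h => hJ h.2.1

theorem toGlued_compl_of_mem_Gs {u a : X} (hu : u ∈ kappa X) (haG : a ∈ Gs u) :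
    toGlued (compl a) = (bunchOfChain X).negB (⟨u, hu⟩, a, false) := by
  have hc : imp (compl a) (compl a) = u := by rw [imp_self_compl hinv, haG.1]
  by_cases hKI : inKI u
  · by_cases ha : a ∈ Hs u
    · rw [BunchData.negB_of_mem_H _ hKI ha, compl_eq_imp_mul_compl hinv hoe ha]
      exact toGlued_mul_compl hinv hoe hu hKI (imp_mem_Hs hinv hoe ha)
    · have hA := mul_compl_eq_of_notMem_Hs hoe haG.1 ha
      rw [BunchData.negB_of_notMem_H (bunchOfChain X) (fun h => ha h.2) (fun h => h.2 hKI.2.1)]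
      show toGlued (compl a) = (⟨u, hu⟩, imp a u, false)
      rw [imp_eq_compl_mul_compl hinv a u, hA]
      exact toGlued_of_mem_Gs hu hc ⟨hc, fun _ => compl_notMem_dotH_of_mul_compl hinv hoe hA⟩
  · by_cases hJ : inKJ u
    · rw [BunchData.negB_of_mem_KJ _ hKI hJ]
      show toGlued (compl a) =
        (⟨u, hu⟩, (bunchOfChain X).lowerCoverFn ⟨u, hu⟩ (imp a u), false)
      rw [lowerCoverFn_imp_eq_compl hinv hoe hu hJ.2 haG.1]
      exact toGlued_of_mem_Gs hu hc (mem_Gs_of_not_inKI hc hKI)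
    · -- `u ∈ κ_o`, so `u = t = f` and `a → u = a'`
      obtain ⟨rfl, hodd⟩ : u ∈ kappaO X :=
        by_contra fun h => hKI ⟨hu, not_not.1 fun hi => hJ ⟨hu, hi⟩, h⟩
      rw [BunchData.negB_of_notMem_H (bunchOfChain X) (fun h => hKI h.1) hJ]
      have h1 : imp a 1 = compl a := by rw [← hodd, compl_one]; rfl
      show toGlued (compl a) = (⟨1, hu⟩, imp a 1, false)
      rw [h1]
      exact toGlued_of_mem_Gs hu hc (mem_Gs_of_not_inKI hc hKI)

theorem toGlued_compl (x : X) : toGlued (compl x) = (bunchOfChain X).negB (toGlued x) := by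
  obtain ⟨⟨⟨u, hu⟩, a, α⟩, hp, rfl⟩ := exists_ofGlued_eq x
  rw [toGlued_ofGlued hinv hoe hp]
  rcases hp with ⟨rfl, haG⟩ | ⟨rfl, hKI, ha⟩
  · exact toGlued_compl_of_mem_Gs hinv hoe hu haG
  · rw [BunchData.negB_dot _ hKI]
    show toGlued (compl (a * compl u)) = _
    rw [← imp_eq_compl_mul_compl hinv]
    exact toGlued_of_mem_Gs hu (imp_self_imp hinv hoe hu ha.1)
      (mem_Gs_of_mem_Hs (imp_mem_Hs hinv hoe ha))

theorem toGlued_imp (x y : X) :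
    toGlued (imp x y) = (bunchOfChain X).impB (toGlued x) (toGlued y) := by
  rw [imp_eq_compl_mul_compl hinv, toGlued_compl hinv hoe, toGlued_mul hinv hoe,
    toGlued_compl hinv hoe]
  rfl

theorem toGlued_fc : toGlued (fc X) = (bunchOfChain X).fB := by
  rw [← compl_one, toGlued_compl hinv hoe, toGlued_one]
  rfl

end OddOrEvenInvolutive

end FLe

/-- Representation, direction C: `𝒢_{(X_𝒢)} = 𝒢` for every bunch of
layer groups `𝒢`, and `X_{(𝒢_X)} ≅ X` for every odd or even involutive FL_e-chain `X`.

The first half is expressed via the chain operations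
`O = (carrier, ·, →, ≤, t, f)` of the constructed chain `X_𝒢`:  the map
`e : u ↦ (u, 1_{G_u}, false)` identifies the skeleton `κ` of `𝒢` (with its order and its
partition) with the skeleton of `X_𝒢`, identifies the layers, the layer groups, the
subgroups, the layer group operations and the transitions of `X_𝒢` with those of `𝒢`.
The second half asserts an isomorphism `ψ` of FL_e-chains from `X` onto the chain
constructed from the bunch `𝒢_X` of `X`. -/
theorem representation_roundtrip :
    -- Part 1: 𝒢_{(X_𝒢)} = 𝒢
    (∀ (K Λ : Type) [LinearOrder K] (B : BunchData K Λ), B.IsBunch →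
      ∀ (O : ChainOps (K × Λ × Bool)) (e : K → K × Λ × Bool),
        O = ⟨B.carrier, B.gmulB, B.impB, B.gle, B.tB, B.fB⟩ →
        e = (fun u => (u, B.unit u, false)) →
        -- the skeletons coincide, with their orders
        O.kappa = Set.range e ∧
        (∀ u v : K, u ≤ v ↔ B.gle (e u) (e v)) ∧
        -- the partitions coincide
        (∀ u : K, (u ∈ B.Ko ↔ e u ∈ O.kappaO) ∧ (u ∈ B.KJ ↔ O.inKJ (e u)) ∧
          (u ∈ B.KI ↔ O.inKI (e u))) ∧
        -- the layers of X_𝒢 are the glued layers of 𝒢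
        (∀ u : K, O.layer (e u) = {p : K × Λ × Bool | p ∈ B.carrier ∧ p.1 = u}) ∧
        -- the layer groups coincide
        (∀ u : K, O.Gs (e u) = (fun z : Λ => ((u, z, false) : K × Λ × Bool)) '' B.G u) ∧
        -- the layer subgroups coincide
        (∀ u ∈ B.KI, O.Hs (e u) =
          (fun z : Λ => ((u, z, false) : K × Λ × Bool)) '' B.H u) ∧
        -- the layer group operations coincide
        (∀ u : K, ∀ x ∈ B.G u, ∀ y ∈ B.G u,
          O.gmul (e u) (u, x, false) (u, y, false) = (u, B.mul u x y, false)) ∧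
        (∀ u : K, ∀ x ∈ B.G u, O.ginv (e u) (u, x, false) = (u, B.inv u x, false)) ∧
        -- the transitions coincide
        (∀ u v : K, u ≤ v → ∀ x ∈ B.G u,
          O.tr (e v) (u, x, false) = (v, B.tr u v x, false))) ∧
    -- Part 2: X_{(𝒢_X)} ≅ X
    (∀ (X : Type) [FLeChain X], OddEven X →
      ∃ ψ : X → kappaT X × X × Bool,
        (∀ x : X, ψ x ∈ (bunchOfChain X).carrier) ∧
        (∀ p ∈ (bunchOfChain X).carrier, ∃! x : X, ψ x = p) ∧
        (∀ x y : X, x ≤ y ↔ (bunchOfChain X).gle (ψ x) (ψ y)) ∧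
        (∀ x y : X, ψ (x * y) = (bunchOfChain X).gmulB (ψ x) (ψ y)) ∧
        (∀ x y : X, ψ (imp x y) = (bunchOfChain X).impB (ψ x) (ψ y)) ∧
        ψ 1 = (bunchOfChain X).tB ∧ ψ (fc X) = (bunchOfChain X).fB) := by
  refine ⟨?_, ?_⟩
  · rintro K Λ _ B hB O e rfl rfl
    exact ⟨kappa_toChainOps hB, le_iff_gle_unit hB,
      fun u => ⟨mem_Ko_iff hB u, mem_KJ_iff hB u, mem_KI_iff hB u⟩, layer_toChainOps hB,
      Gs_toChainOps hB, fun u hu => Hs_toChainOps hB hu,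
      fun u x hx y hy => gmul_toChainOps hB hx hy, fun u x hx => impB_unit hB hx false,
      fun u v huv x hx => gmulB_unit_left hB huv hx⟩
  · rintro X _ ⟨hinv, hoe⟩
    exact ⟨toGlued, toGlued_mem_carrier hinv hoe,
      fun p hp => ⟨ofGlued p, toGlued_ofGlued hinv hoe hp,
        fun x hx => by rw [← hx, ofGlued_toGlued hinv hoe]⟩,
      le_iff_gle_toGlued hinv hoe, toGlued_mul hinv hoe, toGlued_imp hinv hoe, toGlued_one,
      toGlued_fc hinv hoe⟩
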